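/- arXiv:1402.1710 — 6 statements merged into one kernel-verified Lean document; each statement's English description precedes it below -/
import Mathlib

section
/- Let a, b be real numbers with a > -1, b > -1 and a + b < -1, and let u, v be real numbers with u ≠ v. Then ∫_{-∞}^{min(u,v)} (u-s)^a (v-s)^b ds = β̃_{a,b}(u,v) · |u-v|^{a+b+1}, where β̃_{a,b}(u,v) = B(a+1, -1-a-b) if u < v and β̃_{a,b}(u,v) = B(b+1, -1-a-b) if v < u, B denoting the Beta function B(x,y) = ∫_0^1 t^{x-1}(1-t)^{y-1} dt. -/
/-!
Substituting `s = u - (v - u) x` turns the integral into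
`(v - u)^(a+b+1) ∫_0^∞ x^a (1 + x)^b dx`, and `t = x / (1 + x)` identifies the latter with
`B(a + 1, -1 - a - b)`.
-/

open MeasureTheory

/-- The Beta function `B(x,y) = ∫_0^1 t^{x-1} (1-t)^{y-1} dt`. -/
noncomputable def betaFn (x y : ℝ) : ℝ :=
  ∫ t in Set.Ioo (0:ℝ) 1, t ^ (x - 1) * (1 - t) ^ (y - 1)

open Set Real

lemma image_div_one_add_Ioi : (fun s : ℝ => s / (1 + s)) '' Ioi 0 = Ioo 0 1 := by
  ext t
  constructor
  · rintro ⟨s, hs : 0 < s, rfl⟩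
    exact ⟨by positivity, (div_lt_one (by positivity)).2 (by linarith)⟩
  · rintro ⟨ht0, ht1⟩
    have h1t : 0 < 1 - t := by linarith
    refine ⟨t / (1 - t), div_pos ht0 h1t, ?_⟩
    field_simp
    ring

lemma injOn_div_one_add_Ioi : InjOn (fun s : ℝ => s / (1 + s)) (Ioi 0) := by
  intro s (hs : 0 < s) r (hr : 0 < r) h
  have hs1 : 1 + s ≠ 0 := by positivity
  have hr1 : 1 + r ≠ 0 := by positivity
  field_simp at h
  linarith

lemma betaFn_eq_integral_Ioi (x y : ℝ) :
    betaFn x y = ∫ s in Ioi 0, s ^ (x - 1) * (1 + s) ^ (-(x + y)) := by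
  have hderiv : ∀ s ∈ Ioi (0 : ℝ),
      HasDerivWithinAt (fun s : ℝ => s / (1 + s)) (((1 + s) ^ 2)⁻¹) (Ioi 0) s := by
    intro s (hs : 0 < s)
    have hs1 : 1 + s ≠ 0 := by positivity
    refine ((hasDerivAt_id' s).div ((hasDerivAt_id' s).const_add 1) hs1).hasDerivWithinAt
      |>.congr_deriv ?_
    field_simp
    ring
  rw [betaFn, ← image_div_one_add_Ioi,
    integral_image_eq_integral_abs_deriv_smul measurableSet_Ioi hderiv injOn_div_one_add_Ioi]
  refine setIntegral_congr_fun measurableSet_Ioi fun s (hs : 0 < s) => ?_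
  have h1s : 0 < 1 + s := by positivity
  have hsub : 1 - s / (1 + s) = (1 + s)⁻¹ := by field_simp; ring
  rw [hsub, abs_of_pos (by positivity), smul_eq_mul, div_rpow hs.le h1s.le,
    inv_rpow h1s.le, div_eq_mul_inv, ← rpow_neg h1s.le, ← rpow_neg h1s.le, ← rpow_natCast,
    ← rpow_neg h1s.le]
  have hsplit : (1 + s) ^ (-(x + y)) =
      (1 + s) ^ (-((2 : ℕ) : ℝ)) * ((1 + s) ^ (-(x - 1)) * (1 + s) ^ (-(y - 1))) := by
    rw [← rpow_add h1s, ← rpow_add h1s]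
    congr 1
    push_cast
    ring
  rw [hsplit]
  ring

lemma integral_Iio_eq_integral_Ioi_comp_sub_mul {E : Type*} [NormedAddCommGroup E]
    [NormedSpace ℝ E] (f : ℝ → E) (u : ℝ) {c : ℝ} (hc : 0 < c) :
    ∫ s in Iio u, f s = c • ∫ x in Ioi 0, f (u - c * x) := by
  have himage : (fun x => u - c * x) '' Ioi 0 = Iio u := by
    ext s
    constructor
    · rintro ⟨x, hx : 0 < x, rfl⟩
      exact sub_lt_self u (mul_pos hc hx)
    · intro (hs : s < u)
      exact ⟨(u - s) / c, div_pos (by linarith) hc, by field_simp; ring⟩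
  have hinj : InjOn (fun x => u - c * x) (Ioi 0) := fun x _ y _ h => by
    simpa [hc.ne'] using h
  have hderiv : ∀ x ∈ Ioi (0 : ℝ), HasDerivWithinAt (fun x => u - c * x) (-c) (Ioi 0) x :=
    fun x _ => by simpa using ((hasDerivAt_id x).const_mul c).const_sub u |>.hasDerivWithinAt
  rw [← himage, integral_image_eq_integral_abs_deriv_smul measurableSet_Ioi hderiv hinj,
    abs_neg, abs_of_pos hc, integral_smul]

lemma integral_Iio_sub_rpow_mul_sub_rpow (a b : ℝ) {u v : ℝ} (huv : u < v) :
    ∫ s in Iio u, (u - s) ^ a * (v - s) ^ b =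
      betaFn (a + 1) (-1 - a - b) * (v - u) ^ (a + b + 1) := by
  have hc : 0 < v - u := sub_pos.2 huv
  have hbeta : betaFn (a + 1) (-1 - a - b) = ∫ x in Ioi 0, x ^ a * (1 + x) ^ b := by
    rw [betaFn_eq_integral_Ioi]
    ring_nf
  have hintegrand : ∀ x ∈ Ioi (0 : ℝ),
      (u - (u - (v - u) * x)) ^ a * (v - (u - (v - u) * x)) ^ b =
        (v - u) ^ (a + b) * (x ^ a * (1 + x) ^ b) := fun x (hx : 0 < x) => by
    rw [show u - (u - (v - u) * x) = (v - u) * x by ring,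
      show v - (u - (v - u) * x) = (v - u) * (1 + x) by ring,
      mul_rpow hc.le hx.le, mul_rpow hc.le (by positivity), rpow_add hc]
    ring
  rw [integral_Iio_eq_integral_Ioi_comp_sub_mul _ u hc,
    setIntegral_congr_fun measurableSet_Ioi hintegrand, integral_const_mul, hbeta, smul_eq_mul,
    rpow_add_one hc.ne']
  ring

theorem stmt_0_general (a b u v : ℝ)
    (huv : u ≠ v) :
    (∫ s in Set.Iio (min u v), (u - s) ^ a * (v - s) ^ b) =
      (if u < v then betaFn (a + 1) (-1 - a - b) else betaFn (b + 1) (-1 - a - b)) *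
        |u - v| ^ (a + b + 1) := by
  rcases huv.lt_or_gt with h | h
  · rw [if_pos h, min_eq_left h.le, abs_sub_comm, abs_of_pos (sub_pos.2 h)]
    exact integral_Iio_sub_rpow_mul_sub_rpow a b h
  · rw [if_neg h.not_gt, min_eq_right h.le, abs_of_pos (sub_pos.2 h)]
    simp_rw [mul_comm ((u - _) ^ a)]
    rw [integral_Iio_sub_rpow_mul_sub_rpow b a h]
    ring_nf

theorem stmt_0 (a b u v : ℝ) (ha : -1 < a) (hb : -1 < b) (hab : a + b < -1)
    (huv : u ≠ v) :
    (∫ s in Set.Iio (min u v), (u - s) ^ a * (v - s) ^ b) =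
      (if u < v then betaFn (a + 1) (-1 - a - b) else betaFn (b + 1) (-1 - a - b)) *
        |u - v| ^ (a + b + 1) :=
  stmt_0_general a b u v huv
end

section
/- Let a, b be real numbers with a > -1, b > -1 and a + b < -1, and let u, v be real numbers with u ≠ v. Then ∫_{-∞}^{min(u,v)} (u-s)^a (v-s)^b ds ≤ C(a,b) · |u-v|^{a+b+1}, where C(a,b) = max(B(a+1, -1-a-b), B(b+1, -1-a-b)) < ∞ and B denotes the Beta function. -/
open MeasureTheory

/-!
The substitution `t = (u - s) / (v - s)` maps `(-∞, u)` bijectively onto `(0, 1)` when `u < v`,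
with `1 - t = (v - u) / (v - s)` and `dt = (v - u) / (v - s)² ds`. It turns the integral into
exactly `(v - u)^(a+b+1) B(a+1, -1-a-b)`; swapping the roles of `(u, a)` and `(v, b)` handles
`v < u`.
-/

open Set

lemma div_sq_mul_div_rpow_mul_div_rpow {x y c : ℝ} (hx : 0 ≤ x) (hy : 0 < y) (hc : 0 < c)
    (a b : ℝ) :
    c / y ^ 2 * ((x / y) ^ a * (c / y) ^ (-2 - a - b)) = c ^ (-(a + b + 1)) * (x ^ a * y ^ b) := by
  have hy_pow : y ^ b * y ^ 2 * y ^ a * y ^ (-2 - a - b) = 1 := by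
    rw [← Real.rpow_natCast, ← Real.rpow_add hy, ← Real.rpow_add hy, ← Real.rpow_add hy]
    ring_nf
    exact Real.rpow_zero y
  rw [Real.div_rpow hx hy.le, Real.div_rpow hc.le hy.le,
    show -(a + b + 1) = 1 + (-2 - a - b) by ring, Real.rpow_add hc, Real.rpow_one]
  field_simp
  linear_combination (-x ^ a) * hy_pow

section RatioSubstitution

variable {u v : ℝ}

lemma image_div_sub_Iio (huv : u < v) : (fun s => (u - s) / (v - s)) '' Iio u = Ioo 0 1 := by
  ext t
  constructor
  · rintro ⟨s, hs, rfl⟩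
    have hy : 0 < v - s := by linarith [mem_Iio.1 hs]
    exact ⟨div_pos (sub_pos.2 hs) hy, (div_lt_one hy).2 (by linarith)⟩
  · rintro ⟨ht0, ht1⟩
    have hw : (0 : ℝ) < 1 - t := by linarith
    refine ⟨(u - v * t) / (1 - t), ?_, ?_⟩
    · rw [mem_Iio, div_lt_iff₀ hw]
      nlinarith
    · have hu : u - (u - v * t) / (1 - t) = (v - u) * t / (1 - t) := by field_simp; ring
      have hv : v - (u - v * t) / (1 - t) = (v - u) / (1 - t) := by field_simp; ring
      simp only [hu, hv]
      field_simp [(sub_pos.2 huv).ne']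

lemma hasDerivAt_div_sub {s : ℝ} (hs : v - s ≠ 0) :
    HasDerivAt (fun s => (u - s) / (v - s)) ((u - v) / (v - s) ^ 2) s := by
  have hu : HasDerivAt (fun s => u - s) (-1) s := by simpa using (hasDerivAt_id s).const_sub u
  have hv : HasDerivAt (fun s => v - s) (-1) s := by simpa using (hasDerivAt_id s).const_sub v
  exact (hu.div hv hs).congr_deriv (by ring)

lemma injOn_div_sub (huv : u ≠ v) : InjOn (fun s => (u - s) / (v - s)) {s | v - s ≠ 0} := by
  intro s₁ hs₁ s₂ hs₂ h
  rw [div_eq_div_iff hs₁ hs₂] at h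
  have h' : (s₁ - s₂) * (u - v) = 0 := by linear_combination h
  exact sub_eq_zero.1 ((mul_eq_zero.1 h').resolve_right (sub_ne_zero.2 huv))

theorem setIntegral_Iio_sub_rpow_mul_sub_rpow (a b : ℝ) (huv : u < v) :
    ∫ s in Iio u, (u - s) ^ a * (v - s) ^ b =
      (v - u) ^ (a + b + 1) * betaFn (a + 1) (-1 - a - b) := by
  have hc : 0 < v - u := sub_pos.2 huv
  have hpole : ∀ s ∈ Iio u, 0 < v - s := fun s hs => by linarith [mem_Iio.1 hs]
  have hbeta : betaFn (a + 1) (-1 - a - b) =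
      ∫ s in Iio u, (v - u) ^ (-(a + b + 1)) * ((u - s) ^ a * (v - s) ^ b) := by
    rw [betaFn, ← image_div_sub_Iio huv, integral_image_eq_integral_abs_deriv_smul
      measurableSet_Iio (fun s hs => (hasDerivAt_div_sub (hpole s hs).ne').hasDerivWithinAt)
      ((injOn_div_sub huv.ne).mono fun s hs => (hpole s hs).ne')]
    refine setIntegral_congr_fun measurableSet_Iio fun s hs => ?_
    have hy := hpole s hs
    have hw : 1 - (u - s) / (v - s) = (v - u) / (v - s) := by field_simp; ring
    rw [smul_eq_mul, hw, abs_div, abs_of_neg (by linarith), abs_of_pos (by positivity), neg_sub,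
      add_sub_cancel_right, show -1 - a - b - 1 = -2 - a - b by ring]
    exact div_sq_mul_div_rpow_mul_div_rpow (sub_pos.2 hs).le hy hc a b
  rw [hbeta, integral_const_mul, ← mul_assoc, ← Real.rpow_add hc, add_neg_cancel,
    Real.rpow_zero, one_mul]

end RatioSubstitution

theorem stmt_1_general (a b u v : ℝ)
    (huv : u ≠ v) :
    (∫ s in Set.Iio (min u v), (u - s) ^ a * (v - s) ^ b) ≤
      max (betaFn (a + 1) (-1 - a - b)) (betaFn (b + 1) (-1 - a - b)) *
        |u - v| ^ (a + b + 1) := by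
  rcases huv.lt_or_gt with h | h
  · rw [min_eq_left h.le, setIntegral_Iio_sub_rpow_mul_sub_rpow a b h, abs_sub_comm,
      abs_of_pos (sub_pos.2 h), mul_comm]
    gcongr
    exact le_max_left _ _
  · simp_rw [min_eq_right h.le, mul_comm ((u - _) ^ a)]
    rw [setIntegral_Iio_sub_rpow_mul_sub_rpow b a h, abs_of_pos (sub_pos.2 h),
      show b + a + 1 = a + b + 1 by ring, show -1 - b - a = -1 - a - b by ring, mul_comm]
    gcongr
    exact le_max_right _ _

theorem stmt_1 (a b u v : ℝ) (ha : -1 < a) (hb : -1 < b) (hab : a + b < -1)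
    (huv : u ≠ v) :
    (∫ s in Set.Iio (min u v), (u - s) ^ a * (v - s) ^ b) ≤
      max (betaFn (a + 1) (-1 - a - b)) (betaFn (b + 1) (-1 - a - b)) *
        |u - v| ^ (a + b + 1) :=
  stmt_1_general a b u v huv
end

section
/- Let α1, α2 ∈ [0,1) with α1 + α2 ≥ 1, and let F : [0,1]² → (0,∞) be measurable with γ := ∫_{[0,1]²} F(U,V) dU dV < ∞. Assume Δ(ℓ) := ∫_{[0,1]^4} |U-U'+ℓ|^{-α1} |V-V'+ℓ|^{-α2} F(U,V) F(U',V') dU dV dU' dV' is finite for every integer ℓ. Then there exists a constant C > 0 such that for all N ≥ 2, ∑_{i=0}^{N-1} ∑_{j=0}^{N-1} Δ(i-j) ≤ C · N · (log N)^{ε}, where ε = 1 if α1 + α2 = 1 and ε = 0 if α1 + α2 > 1. -/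
/-!
For `|ℓ| ≥ 2` and points of the unit cube, `|U - U' + ℓ| ≥ (|ℓ| + 1) / 3`, so the kernel is at
most `3 ^ (α₁ + α₂) * (|ℓ| + 1) ^ (-(α₁ + α₂))` and `Δ ℓ ≤ 3 ^ (α₁ + α₂) γ² (|ℓ| + 1) ^ (-(α₁ + α₂))`;
the finitely many remaining `ℓ` only change the constant. In the row of index `i` every distance
`|i - j| < N` occurs at most twice, so the double sum is at most
`2 N C₀ ∑_{k < N} (k + 1) ^ (-(α₁ + α₂))`. For `α₁ + α₂ = 1` this is a harmonic sum, bounded by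
`1 + log N`; for `α₁ + α₂ > 1` it is bounded by the sum of a convergent `p`-series.
-/

open MeasureTheory Finset

theorem setIntegral_prod_le_mul_sq {α : Type*} [MeasurableSpace α] {μ : Measure α} [SFinite μ]
    {s : Set α} (hs : MeasurableSet s) {f : α → ℝ} (hf : IntegrableOn f s μ)
    {g : α × α → ℝ} {c : ℝ} (hg₀ : ∀ p ∈ s ×ˢ s, 0 ≤ g p)
    (hgc : ∀ p ∈ s ×ˢ s, g p ≤ c * (f p.1 * f p.2)) :
    ∫ p in s ×ˢ s, g p ∂μ.prod μ ≤ c * (∫ x in s, f x ∂μ) ^ 2 := by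
  have hss : MeasurableSet (s ×ˢ s) := hs.prod hs
  have hff : IntegrableOn (fun p : α × α => f p.1 * f p.2) (s ×ˢ s) (μ.prod μ) := by
    rw [IntegrableOn, ← Measure.prod_restrict]
    exact hf.mul_prod hf
  calc ∫ p in s ×ˢ s, g p ∂μ.prod μ
      ≤ ∫ p in s ×ˢ s, c * (f p.1 * f p.2) ∂μ.prod μ :=
        integral_mono_of_nonneg (ae_restrict_of_forall_mem hss hg₀) (hff.const_mul c)
          (ae_restrict_of_forall_mem hss hgc)
    _ = c * (∫ x in s, f x ∂μ) ^ 2 := by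
        rw [integral_const_mul, setIntegral_prod_mul, sq]

theorem rpow_neg_abs_add_le {α x t : ℝ} (hα : 0 ≤ α) (hx : 2 ≤ |x|) (ht : |t| ≤ 1) :
    |t + x| ^ (-α) ≤ 3 ^ α * (|x| + 1) ^ (-α) := by
  have hlow : (|x| + 1) / 3 ≤ |t + x| := by
    have := abs_sub_abs_le_abs_sub x (-t)
    rw [abs_neg, sub_neg_eq_add, add_comm x] at this
    linarith
  calc |t + x| ^ (-α) ≤ ((|x| + 1) / 3) ^ (-α) :=
        Real.rpow_le_rpow_of_nonpos (by positivity) hlow (neg_nonpos.mpr hα)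
    _ = 3 ^ α * (|x| + 1) ^ (-α) := by
        rw [Real.div_rpow (by positivity) (by norm_num), Real.rpow_neg (by norm_num : (0:ℝ) ≤ 3),
          div_inv_eq_mul, mul_comm]

theorem exists_le_mul_of_le_mul_of_le_natAbs {a : ℤ → ℝ} {w : ℕ → ℝ} (hw : ∀ k, 0 < w k)
    {c : ℝ} (hc : 0 ≤ c) (M : ℕ) (ha : ∀ ℓ : ℤ, M ≤ ℓ.natAbs → a ℓ ≤ c * w ℓ.natAbs) :
    ∃ C, 0 ≤ C ∧ ∀ ℓ : ℤ, a ℓ ≤ C * w ℓ.natAbs := by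
  obtain ⟨B, hB⟩ := ((Icc (-(M:ℤ)) M).image fun ℓ => a ℓ / w ℓ.natAbs).bddAbove
  refine ⟨max c B, le_max_of_le_left hc, fun ℓ => ?_⟩
  by_cases hℓ : M ≤ ℓ.natAbs
  · exact (ha ℓ hℓ).trans (by gcongr; exacts [(hw _).le, le_max_left _ _])
  · have hmem : a ℓ / w ℓ.natAbs ≤ B := hB (mem_image_of_mem _ (mem_Icc.mpr (by omega)))
    calc a ℓ = a ℓ / w ℓ.natAbs * w ℓ.natAbs := (div_mul_cancel₀ _ (hw _).ne').symm
      _ ≤ max c B * w ℓ.natAbs := by gcongr; exacts [(hw _).le, hmem.trans (le_max_right _ _)]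

theorem sum_range_natAbs_sub_le {f : ℕ → ℝ} (hf : ∀ k, 0 ≤ f k) {N i : ℕ} (hi : i < N) :
    ∑ j ∈ range N, f ((i : ℤ) - j).natAbs ≤ 2 * ∑ k ∈ range N, f k := by
  have hbelow : ∑ j ∈ range (i + 1), f ((i : ℤ) - j).natAbs ≤ ∑ k ∈ range N, f k := by
    calc ∑ j ∈ range (i + 1), f ((i : ℤ) - j).natAbs = ∑ j ∈ range (i + 1), f (i + 1 - 1 - j) :=
          sum_congr rfl fun j hj => by rw [mem_range] at hj; congr 1; omega
      _ = ∑ k ∈ range (i + 1), f k := sum_range_reflect f _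
      _ ≤ ∑ k ∈ range N, f k := sum_le_sum_of_subset_of_nonneg (range_subset_range.mpr hi)
          fun k _ _ => hf k
  have habove : ∑ j ∈ Ico i N, f ((i : ℤ) - j).natAbs ≤ ∑ k ∈ range N, f k := by
    calc ∑ j ∈ Ico i N, f ((i : ℤ) - j).natAbs = ∑ k ∈ range (N - i), f k := by
          rw [sum_Ico_eq_sum_range]; exact sum_congr rfl fun k _ => by congr 1; omega
      _ ≤ ∑ k ∈ range N, f k := sum_le_sum_of_subset_of_nonneg
          (range_subset_range.mpr (Nat.sub_le N i)) fun k _ _ => hf k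
  calc ∑ j ∈ range N, f ((i : ℤ) - j).natAbs
      = ∑ j ∈ range i, f ((i : ℤ) - j).natAbs + ∑ j ∈ Ico i N, f ((i : ℤ) - j).natAbs :=
        (sum_range_add_sum_Ico _ hi.le).symm
    _ ≤ ∑ j ∈ range (i + 1), f ((i : ℤ) - j).natAbs + ∑ j ∈ Ico i N, f ((i : ℤ) - j).natAbs := by
        gcongr
        · exact fun _ _ _ => hf _
        · exact i.le_succ
    _ ≤ 2 * ∑ k ∈ range N, f k := by linarith

theorem sum_range_sum_range_le_of_le_natAbs {a : ℤ → ℝ} {f : ℕ → ℝ} (hf : ∀ k, 0 ≤ f k)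
    (ha : ∀ ℓ : ℤ, a ℓ ≤ f ℓ.natAbs) (N : ℕ) :
    ∑ i ∈ range N, ∑ j ∈ range N, a ((i : ℤ) - j) ≤ 2 * N * ∑ k ∈ range N, f k := by
  calc ∑ i ∈ range N, ∑ j ∈ range N, a ((i : ℤ) - j)
      ≤ ∑ _i ∈ range N, 2 * ∑ k ∈ range N, f k := sum_le_sum fun i hi =>
        (sum_le_sum fun j _ => ha _).trans (sum_range_natAbs_sub_le hf (mem_range.mp hi))
    _ = 2 * N * ∑ k ∈ range N, f k := by rw [sum_const, card_range, nsmul_eq_mul]; ring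

theorem sum_range_rpow_neg_le_harmonic {s : ℝ} (hs : 1 ≤ s) (N : ℕ) :
    ∑ k ∈ range N, ((k : ℝ) + 1) ^ (-s) ≤ harmonic N := by
  rw [harmonic, Rat.cast_sum]
  refine sum_le_sum fun k _ => ?_
  push_cast
  calc ((k : ℝ) + 1) ^ (-s) ≤ ((k : ℝ) + 1) ^ (-1 : ℝ) :=
        Real.rpow_le_rpow_of_exponent_le (by linarith [k.cast_nonneg (α := ℝ)]) (by linarith)
    _ = ((k : ℝ) + 1)⁻¹ := Real.rpow_neg_one _

theorem summable_nat_add_one_rpow_neg {s : ℝ} (hs : 1 < s) :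
    Summable fun k : ℕ => ((k : ℝ) + 1) ^ (-s) := by
  have h := (summable_nat_add_iff 1).mpr (Real.summable_nat_rpow_inv.mpr hs)
  refine h.congr fun k => ?_
  rw [Real.rpow_neg (by positivity)]
  push_cast
  rfl

theorem exists_sum_range_rpow_neg_le {s : ℝ} (hs : 1 ≤ s) :
    ∃ c, ∀ N : ℕ, 2 ≤ N →
      ∑ k ∈ range N, ((k : ℝ) + 1) ^ (-s) ≤ c * Real.log N ^ (if s = 1 then (1:ℕ) else 0) := by
  by_cases hs1 : s = 1
  · refine ⟨1 / Real.log 2 + 1, fun N hN => ?_⟩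
    have hlog2 : 0 < Real.log 2 := Real.log_pos one_lt_two
    have hlogN : Real.log 2 ≤ Real.log N := Real.log_le_log two_pos (by exact_mod_cast hN)
    have hone : 1 ≤ 1 / Real.log 2 * Real.log N := by
      rw [div_mul_eq_mul_div, one_mul, le_div_iff₀ hlog2]; linarith
    rw [if_pos hs1, pow_one]
    calc ∑ k ∈ range N, ((k : ℝ) + 1) ^ (-s) ≤ harmonic N := sum_range_rpow_neg_le_harmonic hs N
      _ ≤ 1 + Real.log N := harmonic_le_one_add_log N
      _ ≤ (1 / Real.log 2 + 1) * Real.log N := by linarith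
  · refine ⟨∑' k : ℕ, ((k : ℝ) + 1) ^ (-s), fun N _ => ?_⟩
    rw [if_neg hs1, pow_zero, mul_one]
    exact (summable_nat_add_one_rpow_neg (lt_of_le_of_ne hs (Ne.symm hs1))).sum_le_tsum _
      fun k _ => by positivity

theorem setIntegral_rpow_kernel_le {α₁ α₂ : ℝ} (hα₁ : 0 ≤ α₁) (hα₂ : 0 ≤ α₂) {F : ℝ → ℝ → ℝ}
    (hF : ∀ U V : ℝ, U ∈ Set.Icc (0:ℝ) 1 → V ∈ Set.Icc (0:ℝ) 1 → 0 ≤ F U V)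
    (hFint : IntegrableOn (fun p : ℝ × ℝ => F p.1 p.2) (Set.Icc (0:ℝ) 1 ×ˢ Set.Icc (0:ℝ) 1))
    {ℓ : ℤ} (hℓ : 2 ≤ ℓ.natAbs) :
    ∫ p in (Set.Icc (0:ℝ) 1 ×ˢ Set.Icc (0:ℝ) 1) ×ˢ (Set.Icc (0:ℝ) 1 ×ˢ Set.Icc (0:ℝ) 1),
        |p.1.1 - p.2.1 + (ℓ:ℝ)| ^ (-α₁) * |p.1.2 - p.2.2 + (ℓ:ℝ)| ^ (-α₂) *
          F p.1.1 p.1.2 * F p.2.1 p.2.2 ≤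
      3 ^ (α₁ + α₂) * (∫ p in Set.Icc (0:ℝ) 1 ×ˢ Set.Icc (0:ℝ) 1, F p.1 p.2) ^ 2 *
        ((ℓ.natAbs : ℝ) + 1) ^ (-(α₁ + α₂)) := by
  have hℓR : (ℓ.natAbs : ℝ) = |(ℓ : ℝ)| := by rw [Nat.cast_natAbs, Int.cast_abs]
  have hℓ2 : 2 ≤ |(ℓ : ℝ)| := by rw [← hℓR]; exact_mod_cast hℓ
  have hdiff : ∀ {x y : ℝ}, x ∈ Set.Icc (0:ℝ) 1 → y ∈ Set.Icc (0:ℝ) 1 → |x - y| ≤ 1 :=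
    fun hx hy => abs_sub_le_iff.mpr ⟨by linarith [hx.2, hy.1], by linarith [hx.1, hy.2]⟩
  have hkernel : ∀ {x y : ℝ} {α : ℝ}, 0 ≤ α → x ∈ Set.Icc (0:ℝ) 1 → y ∈ Set.Icc (0:ℝ) 1 →
      |x - y + ℓ| ^ (-α) ≤ 3 ^ α * ((ℓ.natAbs : ℝ) + 1) ^ (-α) :=
    fun hα hx hy => hℓR ▸ rpow_neg_abs_add_le hα hℓ2 (hdiff hx hy)
  have hpow : ∀ {b : ℝ}, 0 < b →
      (3 : ℝ) ^ α₁ * b ^ (-α₁) * (3 ^ α₂ * b ^ (-α₂)) = 3 ^ (α₁ + α₂) * b ^ (-(α₁ + α₂)) := by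
    intro b hb
    rw [Real.rpow_add (by norm_num), neg_add, Real.rpow_add hb]; ring
  rw [Measure.volume_eq_prod, mul_right_comm]
  refine setIntegral_prod_le_mul_sq (measurableSet_Icc.prod measurableSet_Icc) hFint ?_ ?_
  · rintro ⟨⟨U, V⟩, U', V'⟩ ⟨⟨hU, hV⟩, hU', hV'⟩
    have := hF U V hU hV
    have := hF U' V' hU' hV'
    positivity
  · rintro ⟨⟨U, V⟩, U', V'⟩ ⟨⟨hU, hV⟩, hU', hV'⟩
    rw [← hpow (by positivity), mul_assoc]
    gcongr
    · exact mul_nonneg (hF U V hU hV) (hF U' V' hU' hV')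
    · exact hkernel hα₁ hU hU'
    · exact hkernel hα₂ hV hV'

theorem stmt_3_general (α₁ α₂ : ℝ) (hα₁ : 0 ≤ α₁) (hα₂ : 0 ≤ α₂)
    (hsum : 1 ≤ α₁ + α₂)
    (F : ℝ → ℝ → ℝ)
    (hFpos : ∀ U V : ℝ, U ∈ Set.Icc (0:ℝ) 1 → V ∈ Set.Icc (0:ℝ) 1 → 0 < F U V)
    -- `γ < ∞` : `F` is integrable on the unit square
    (hγfin : IntegrableOn (fun p : ℝ × ℝ => F p.1 p.2)
      (Set.Icc (0:ℝ) 1 ×ˢ Set.Icc (0:ℝ) 1))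
    (Δ : ℤ → ℝ)
    (hΔ : ∀ ℓ : ℤ, Δ ℓ =
      ∫ p in (Set.Icc (0:ℝ) 1 ×ˢ Set.Icc (0:ℝ) 1) ×ˢ (Set.Icc (0:ℝ) 1 ×ˢ Set.Icc (0:ℝ) 1),
        |p.1.1 - p.2.1 + (ℓ:ℝ)| ^ (-α₁) * |p.1.2 - p.2.2 + (ℓ:ℝ)| ^ (-α₂) *
          F p.1.1 p.1.2 * F p.2.1 p.2.2) :
    ∃ C : ℝ, 0 < C ∧ ∀ N : ℕ, 2 ≤ N →
      ∑ i ∈ range N, ∑ j ∈ range N, Δ ((i:ℤ) - (j:ℤ)) ≤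
        C * N * Real.log N ^ (if α₁ + α₂ = 1 then (1:ℕ) else 0) := by
  obtain ⟨C₀, hC₀, hΔC₀⟩ := exists_le_mul_of_le_mul_of_le_natAbs (a := Δ)
    (fun k => by positivity : ∀ k : ℕ, 0 < ((k : ℝ) + 1) ^ (-(α₁ + α₂))) (by positivity) 2
    fun ℓ hℓ => (hΔ ℓ).trans_le <|
      setIntegral_rpow_kernel_le hα₁ hα₂ (fun U V hU hV => (hFpos U V hU hV).le) hγfin hℓ
  obtain ⟨c, hc⟩ := exists_sum_range_rpow_neg_le hsum
  refine ⟨max (2 * C₀ * c) 1, by positivity, fun N hN => ?_⟩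
  set L := Real.log N ^ (if α₁ + α₂ = 1 then (1:ℕ) else 0)
  have hL : 0 ≤ L := pow_nonneg (Real.log_natCast_nonneg N) _
  calc ∑ i ∈ range N, ∑ j ∈ range N, Δ ((i:ℤ) - (j:ℤ))
      ≤ 2 * N * ∑ k ∈ range N, C₀ * ((k : ℝ) + 1) ^ (-(α₁ + α₂)) :=
        sum_range_sum_range_le_of_le_natAbs (fun k => by positivity) hΔC₀ N
    _ = 2 * C₀ * N * ∑ k ∈ range N, ((k : ℝ) + 1) ^ (-(α₁ + α₂)) := by rw [← mul_sum]; ring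
    _ ≤ 2 * C₀ * N * (c * L) := by gcongr; exact hc N hN
    _ = 2 * C₀ * c * (N * L) := by ring
    _ ≤ max (2 * C₀ * c) 1 * (N * L) := by gcongr; exact le_max_left _ _
    _ = max (2 * C₀ * c) 1 * N * L := by ring

theorem stmt_3 (α₁ α₂ : ℝ) (hα₁ : 0 ≤ α₁) (hα₁' : α₁ < 1) (hα₂ : 0 ≤ α₂) (hα₂' : α₂ < 1)
    (hsum : 1 ≤ α₁ + α₂)
    (F : ℝ → ℝ → ℝ) (hFmeas : Measurable (Function.uncurry F))
    (hFpos : ∀ U V : ℝ, U ∈ Set.Icc (0:ℝ) 1 → V ∈ Set.Icc (0:ℝ) 1 → 0 < F U V)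
    -- `γ < ∞` : `F` is integrable on the unit square
    (hγfin : IntegrableOn (fun p : ℝ × ℝ => F p.1 p.2)
      (Set.Icc (0:ℝ) 1 ×ˢ Set.Icc (0:ℝ) 1))
    (Δ : ℤ → ℝ)
    -- `Δ(ℓ) < ∞` : the integrand defining `Δ(ℓ)` is integrable on `[0,1]^4`
    (hΔfin : ∀ ℓ : ℤ, IntegrableOn
      (fun p : (ℝ × ℝ) × (ℝ × ℝ) =>
        |p.1.1 - p.2.1 + (ℓ:ℝ)| ^ (-α₁) * |p.1.2 - p.2.2 + (ℓ:ℝ)| ^ (-α₂) *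
          F p.1.1 p.1.2 * F p.2.1 p.2.2)
      ((Set.Icc (0:ℝ) 1 ×ˢ Set.Icc (0:ℝ) 1) ×ˢ (Set.Icc (0:ℝ) 1 ×ˢ Set.Icc (0:ℝ) 1)))
    (hΔ : ∀ ℓ : ℤ, Δ ℓ =
      ∫ p in (Set.Icc (0:ℝ) 1 ×ˢ Set.Icc (0:ℝ) 1) ×ˢ (Set.Icc (0:ℝ) 1 ×ˢ Set.Icc (0:ℝ) 1),
        |p.1.1 - p.2.1 + (ℓ:ℝ)| ^ (-α₁) * |p.1.2 - p.2.2 + (ℓ:ℝ)| ^ (-α₂) *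
          F p.1.1 p.1.2 * F p.2.1 p.2.2) :
    ∃ C : ℝ, 0 < C ∧ ∀ N : ℕ, 2 ≤ N →
      ∑ i ∈ range N, ∑ j ∈ range N, Δ ((i:ℤ) - (j:ℤ)) ≤
        C * N * Real.log N ^ (if α₁ + α₂ = 1 then (1:ℕ) else 0) :=
  stmt_3_general α₁ α₂ hα₁ hα₂ hsum F hFpos hγfin Δ hΔ
end

section
/- Let α1, α2 ∈ [0,1) with α1 + α2 < 1, and let F : [0,1]² → (0,∞) be measurable with γ := ∫_{[0,1]²} F(U,V) dU dV < ∞. Assume Δ(ℓ) := ∫_{[0,1]^4} |U-U'+ℓ|^{-α1} |V-V'+ℓ|^{-α2} F(U,V) F(U',V') dU dV dU' dV' is finite for every integer ℓ. Then lim_{N→∞} N^{α1+α2-2} · ∑_{i=0}^{N-1} ∑_{j=0}^{N-1} Δ(i-j) = 2γ² / ((1-α1-α2)(2-α1-α2)). -/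
open MeasureTheory Finset Filter

/-!
Write `α = α₁ + α₂`. For `|ℓ| ≥ 2` the kernel `|U - U' + ℓ|^(-α₁) |V - V' + ℓ|^(-α₂)` lies between
`(|ℓ| + 1)^(-α)` and `(|ℓ| - 1)^(-α)` on `[0,1]⁴`, so `Δ(ℓ) = γ² |ℓ|^(-α) + e(ℓ)` with
`|e(ℓ)| ≤ γ² ((|ℓ| - 1)^(-α) - (|ℓ| + 1)^(-α))`, a telescoping and hence summable error.
Each value of `i - j` occurs at most `N` times, so a summable error changes the double sum by
`O(N)`, which is negligible against `N^(2-α)`. For the main term,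
`∑_{i,j<N} |i - j|^(-α) = 2 ∑_{k<N} (N - k) k^(-α) + O(N)`, and since `x ↦ (N - x) x^(-α)` is
antitone on `[1, N]`, the last sum is `∫₁ᴺ (N - x) x^(-α) dx + O(N) = N^(2-α)/((1-α)(2-α)) + O(N)`.
-/

theorem sum_range_sum_range_natAbs_sub (φ : ℕ → ℝ) (N : ℕ) :
    ∑ i ∈ range N, ∑ j ∈ range N, φ ((i : ℤ) - j).natAbs =
      2 * ∑ k ∈ range N, ((N : ℝ) - k) * φ k - N * φ 0 := by
  induction N with
  | zero => simp
  | succ N ih =>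
    have hrow : ∑ j ∈ range N, φ ((N : ℤ) - j).natAbs = ∑ k ∈ range N, φ (k + 1) := by
      rw [← sum_range_reflect]
      exact sum_congr rfl fun j hj => by rw [mem_range] at hj; congr 1; omega
    have hcol : ∑ i ∈ range N, φ ((i : ℤ) - N).natAbs = ∑ k ∈ range N, φ (k + 1) := by
      rw [← hrow]
      exact sum_congr rfl fun j _ => by congr 1; omega
    have hshift : ∑ k ∈ range N, φ (k + 1) + φ 0 = ∑ k ∈ range N, φ k + φ N := by
      rw [← sum_range_succ', sum_range_succ]
    have hweight : ∑ k ∈ range N, (((N + 1 : ℕ) : ℝ) - k) * φ k =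
        ∑ k ∈ range N, ((N : ℝ) - k) * φ k + ∑ k ∈ range N, φ k := by
      rw [← sum_add_distrib]; push_cast; exact sum_congr rfl fun k _ => by ring
    simp only [sum_range_succ, sum_add_distrib, hrow, hcol, ih, sub_self, Int.natAbs_zero, hweight]
    push_cast
    linear_combination 2 * hshift

theorem abs_sum_range_sum_range_sub_le {e : ℤ → ℝ} (he : Summable e) (N : ℕ) :
    |∑ i ∈ range N, ∑ j ∈ range N, e (i - j)| ≤ N * ∑' ℓ, |e ℓ| := by
  have hrow (i : ℕ) : ∑ j ∈ range N, |e (i - j)| ≤ ∑' ℓ, |e ℓ| := by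
    rw [← sum_image (g := fun j : ℕ => (i : ℤ) - j) (f := fun ℓ => |e ℓ|)
      (fun j _ k _ h => by simpa using h)]
    exact he.abs.sum_le_tsum _ fun _ _ => abs_nonneg _
  calc |∑ i ∈ range N, ∑ j ∈ range N, e (i - j)|
      ≤ ∑ i ∈ range N, ∑ j ∈ range N, |e (i - j)| :=
        (abs_sum_le_sum_abs _ _).trans (sum_le_sum fun i _ => abs_sum_le_sum_abs _ _)
    _ ≤ ∑ _i ∈ range N, ∑' ℓ, |e ℓ| := sum_le_sum fun i _ => hrow i
    _ = N * ∑' ℓ, |e ℓ| := by simp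

theorem tendsto_rpow_mul_of_abs_sub_le {a C L : ℝ} (ha : a < 1) {x y : ℕ → ℝ}
    (hx : Tendsto (fun N : ℕ => (N : ℝ) ^ (a - 2) * x N) atTop (nhds L))
    (hxy : ∀ N, |y N - x N| ≤ C * N) :
    Tendsto (fun N : ℕ => (N : ℝ) ^ (a - 2) * y N) atTop (nhds L) := by
  have hsmall : Tendsto (fun N : ℕ => (N : ℝ) ^ (a - 2) * (y N - x N)) atTop (nhds 0) := by
    have hpow : Tendsto (fun N : ℕ => C * (N : ℝ) ^ (a - 1)) atTop (nhds 0) := by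
      simpa using ((tendsto_rpow_neg_atTop (y := 1 - a) (by linarith)).comp
        tendsto_natCast_atTop_atTop).const_mul C
    refine squeeze_zero_norm' ?_ hpow
    filter_upwards [eventually_gt_atTop 0] with N hN
    have hN : (0 : ℝ) < N := by exact_mod_cast hN
    calc ‖(N : ℝ) ^ (a - 2) * (y N - x N)‖ = (N : ℝ) ^ (a - 2) * |y N - x N| := by
          rw [norm_mul, Real.norm_of_nonneg (by positivity), Real.norm_eq_abs]
      _ ≤ (N : ℝ) ^ (a - 2) * (C * N) := by gcongr; exact hxy N
      _ = C * (N : ℝ) ^ (a - 1) := by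
          rw [show a - 1 = a - 2 + 1 by ring, Real.rpow_add_one hN.ne']; ring
  simpa [mul_sub] using hx.add hsmall

theorem AntitoneOn.sum_range_le_integral_add {f : ℝ → ℝ} {x₀ : ℝ} {n : ℕ}
    (hf : AntitoneOn f (Set.Icc x₀ (x₀ + n))) :
    ∑ i ∈ range n, f (x₀ + i) ≤ (∫ x in x₀..x₀ + n, f x) + (f x₀ - f (x₀ + n)) := by
  have h := hf.sum_le_integral
  have hshift : ∑ i ∈ range n, f (x₀ + i) + f (x₀ + n) =
      ∑ i ∈ range n, f (x₀ + ↑(i + 1)) + f x₀ := by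
    simpa using (sum_range_succ (fun i => f (x₀ + i)) n).symm.trans
      (sum_range_succ' (fun i => f (x₀ + i)) n)
  linarith

theorem antitoneOn_sub_mul_rpow_neg {a : ℝ} (ha : 0 ≤ a) (N : ℝ) :
    AntitoneOn (fun x : ℝ => (N - x) * x ^ (-a)) (Set.Icc 1 N) := by
  intro x hx y hy hxy
  have hx0 : 0 < x := one_pos.trans_le hx.1
  exact mul_le_mul (by linarith) (Real.rpow_le_rpow_of_nonpos hx0 hxy (neg_nonpos.2 ha))
    (Real.rpow_nonneg (by linarith [hy.1]) _) (by linarith [hx.2])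

theorem integral_sub_mul_rpow_neg {a N : ℝ} (ha : a < 1) (hN : 1 ≤ N) :
    ∫ x in (1 : ℝ)..N, (N - x) * x ^ (-a) =
      N ^ (2 - a) / ((1 - a) * (2 - a)) - N / (1 - a) + 1 / (2 - a) := by
  have hN0 : 0 < N := one_pos.trans_le hN
  have hcongr : Set.EqOn (fun x : ℝ => (N - x) * x ^ (-a))
      (fun x => N * x ^ (-a) - x ^ (1 - a)) (Set.uIcc 1 N) := by
    intro x hx
    rw [Set.uIcc_of_le hN] at hx
    have hx0 : 0 < x := one_pos.trans_le hx.1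
    simp only [show 1 - a = -a + 1 by ring, Real.rpow_add_one hx0.ne']
    ring
  have hint (r : ℝ) (hr : -1 < r) : IntervalIntegrable (fun x : ℝ => x ^ r) volume 1 N :=
    intervalIntegral.intervalIntegrable_rpow' hr
  rw [intervalIntegral.integral_congr hcongr, intervalIntegral.integral_sub
    ((hint _ (by linarith)).const_mul N) (hint _ (by linarith)),
    intervalIntegral.integral_const_mul, integral_rpow (Or.inl (by linarith)),
    integral_rpow (Or.inl (by linarith)), Real.one_rpow, Real.one_rpow,
    show -a + 1 = 1 - a by ring, show 1 - a + 1 = 2 - a by ring,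
    show (2 : ℝ) - a = (1 - a) + 1 by ring, Real.rpow_add_one hN0.ne']
  have h1 : (1 : ℝ) - a ≠ 0 := by linarith
  have h2 : (1 : ℝ) - a + 1 ≠ 0 := by linarith
  field_simp
  ring

theorem abs_sum_range_mul_rpow_neg_sub_le {a : ℝ} (ha0 : 0 ≤ a) (ha1 : a < 1) (N : ℕ) :
    |∑ k ∈ range N, ((N : ℝ) - k) * (k : ℝ) ^ (-a) - (N : ℝ) ^ (2 - a) / ((1 - a) * (2 - a))|
      ≤ (3 + 1 / (1 - a)) * N := by
  rcases N with _ | n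
  · simp [Real.zero_rpow (by linarith : (2 : ℝ) - a ≠ 0)]
  set N : ℝ := ((n + 1 : ℕ) : ℝ) with hNdef
  have hN : N = 1 + n := by rw [hNdef]; push_cast; ring
  have hN1 : 1 ≤ N := by rw [hN]; linarith [n.cast_nonneg (α := ℝ)]
  set f : ℝ → ℝ := fun x => (N - x) * x ^ (-a)
  have hanti : AntitoneOn f (Set.Icc 1 (1 + n)) := hN ▸ antitoneOn_sub_mul_rpow_neg ha0 N
  -- the `k = 0` term carries the junk value `0 ^ (-a) ∈ [0, 1]`
  have hsum : ∑ k ∈ range (n + 1), (N - k) * (k : ℝ) ^ (-a) =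
      N * (0 : ℝ) ^ (-a) + ∑ i ∈ range n, f (1 + i) := by
    rw [sum_range_succ', add_comm]
    push_cast
    simp only [f, add_comm (1 : ℝ), sub_zero]
  have hlow := hanti.integral_le_sum
  have hupp := hanti.sum_range_le_integral_add
  rw [← hN, integral_sub_mul_rpow_neg ha1 hN1] at hlow hupp
  have hf1 : f 1 = N - 1 := by simp [f]
  have hfN : f N = 0 := by simp [f]
  rw [hf1, hfN] at hupp
  have hzero₀ := Real.zero_rpow_nonneg (-a)
  have hzero₁ := Real.zero_rpow_le_one (-a)
  have hinv1 : 0 ≤ 1 / (1 - a) := by apply div_nonneg <;> linarith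
  have hinv2 : 1 / (2 - a) ≤ 1 := by rw [div_le_one] <;> linarith
  have hinv2' : 0 ≤ 1 / (2 - a) := by apply div_nonneg <;> linarith
  have hNa : N / (1 - a) = 1 / (1 - a) * N := by ring
  rw [hsum, abs_le]
  constructor <;> nlinarith

theorem abs_sum_range_sum_range_sub_sub_le {a c : ℝ} (ha0 : 0 ≤ a) (ha1 : a < 1) {g : ℤ → ℝ}
    (hg : Summable fun ℓ : ℤ => g ℓ - c * |(ℓ : ℝ)| ^ (-a)) (N : ℕ) :
    |∑ i ∈ range N, ∑ j ∈ range N, g (i - j) -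
        2 * c * ((N : ℝ) ^ (2 - a) / ((1 - a) * (2 - a)))|
      ≤ ((∑' ℓ, |g ℓ - c * |(ℓ : ℝ)| ^ (-a)|) + 2 * |c| * (3 + 1 / (1 - a)) + |c|) * N := by
  set e : ℤ → ℝ := fun ℓ => g ℓ - c * |(ℓ : ℝ)| ^ (-a)
  set φ : ℕ → ℝ := fun k => (k : ℝ) ^ (-a)
  set M : ℝ := (N : ℝ) ^ (2 - a) / ((1 - a) * (2 - a))
  have hsplit : ∑ i ∈ range N, ∑ j ∈ range N, g (i - j) =
      ∑ i ∈ range N, ∑ j ∈ range N, e (i - j) +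
        c * (2 * ∑ k ∈ range N, ((N : ℝ) - k) * φ k - N * φ 0) := by
    rw [← sum_range_sum_range_natAbs_sub, mul_sum, ← sum_add_distrib]
    refine sum_congr rfl fun i _ => ?_
    rw [mul_sum, ← sum_add_distrib]
    refine sum_congr rfl fun j _ => ?_
    simp only [e, φ, Nat.cast_natAbs, Int.cast_abs]
    ring
  have he := abs_sum_range_sum_range_sub_le hg N
  have hW : |∑ k ∈ range N, ((N : ℝ) - k) * φ k - M| ≤ (3 + 1 / (1 - a)) * N :=
    abs_sum_range_mul_rpow_neg_sub_le ha0 ha1 N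
  have hφ0 : |φ 0| ≤ 1 := by
    simpa [φ, abs_of_nonneg (Real.zero_rpow_nonneg _)] using Real.zero_rpow_le_one (-a)
  have hN : (0 : ℝ) ≤ N := N.cast_nonneg
  calc |∑ i ∈ range N, ∑ j ∈ range N, g (i - j) - 2 * c * M|
      = |∑ i ∈ range N, ∑ j ∈ range N, e (i - j) +
          2 * c * (∑ k ∈ range N, ((N : ℝ) - k) * φ k - M) - c * N * φ 0| := by
        rw [hsplit]; ring_nf
    _ ≤ |∑ i ∈ range N, ∑ j ∈ range N, e (i - j)| +
          2 * |c| * |∑ k ∈ range N, ((N : ℝ) - k) * φ k - M| + |c| * N * |φ 0| := by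
        refine (abs_sub _ _).trans (add_le_add ((abs_add_le _ _).trans_eq ?_) ?_) <;>
          simp [abs_mul, abs_of_nonneg hN]
    _ ≤ ((∑' ℓ, |e ℓ|) + 2 * |c| * (3 + 1 / (1 - a)) + |c|) * N := by
        have h2 := mul_le_mul_of_nonneg_left hW (by positivity : (0 : ℝ) ≤ 2 * |c|)
        have h3 := mul_le_mul_of_nonneg_left hφ0 (by positivity : (0 : ℝ) ≤ |c| * N)
        linarith

theorem tendsto_rpow_mul_sum_range_sum_range_sub {a c : ℝ} (ha0 : 0 ≤ a) (ha1 : a < 1)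
    {g : ℤ → ℝ} (hg : Summable fun ℓ : ℤ => g ℓ - c * |(ℓ : ℝ)| ^ (-a)) :
    Tendsto (fun N : ℕ => (N : ℝ) ^ (a - 2) * ∑ i ∈ range N, ∑ j ∈ range N, g (i - j))
      atTop (nhds (2 * c / ((1 - a) * (2 - a)))) := by
  refine tendsto_rpow_mul_of_abs_sub_le ha1 (tendsto_const_nhds.congr' ?_)
    (abs_sum_range_sum_range_sub_sub_le ha0 ha1 hg)
  filter_upwards [eventually_gt_atTop 0] with N hN
  have hpow : (N : ℝ) ^ (a - 2) * (N : ℝ) ^ (2 - a) = 1 := by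
    rw [← Real.rpow_add (by exact_mod_cast hN)]; simp
  rw [mul_div_assoc', mul_div_assoc', mul_left_comm, hpow]
  ring

theorem Antitone.summable_sub_add {v : ℕ → ℝ} (hv : Antitone v) (hv0 : ∀ n, 0 ≤ v n) (k : ℕ) :
    Summable fun n => v n - v (n + k) := by
  induction k with
  | zero => simp
  | succ k ih =>
    have hstep : Summable fun n => v n - v (n + 1) :=
      summable_of_sum_range_le (fun n => sub_nonneg.2 (hv n.le_succ))
        fun N => by rw [sum_range_sub']; linarith [hv0 N]
    have := ih.add ((summable_nat_add_iff k).2 hstep)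
    simpa [add_assoc] using this

theorem summable_abs_sub_one_rpow_neg_sub {a : ℝ} (ha : 0 ≤ a) :
    Summable fun ℓ : ℤ => (|(ℓ : ℝ)| - 1) ^ (-a) - (|(ℓ : ℝ)| + 1) ^ (-a) := by
  have hv : Antitone fun n : ℕ => ((n : ℝ) + 1) ^ (-a) := fun m n hmn =>
    Real.rpow_le_rpow_of_nonpos (by positivity) (by gcongr) (neg_nonpos.2 ha)
  have hnat : Summable fun n : ℕ => ((n : ℝ) - 1) ^ (-a) - ((n : ℝ) + 1) ^ (-a) := by
    refine (summable_nat_add_iff 2).1 ((hv.summable_sub_add (fun n => by positivity) 2).congr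
      fun n => ?_)
    push_cast
    ring_nf
  refine Summable.of_nat_of_neg ?_ ?_ <;> simpa using hnat

theorem abs_add_rpow_neg_mem_Icc {α t ℓ : ℝ} (hα : 0 ≤ α) (ht : |t| ≤ 1) (hℓ : 1 < |ℓ|) :
    |t + ℓ| ^ (-α) ∈ Set.Icc ((|ℓ| + 1) ^ (-α)) ((|ℓ| - 1) ^ (-α)) := by
  have hlow : |ℓ| - 1 ≤ |t + ℓ| := by
    have h := abs_sub (t + ℓ) t
    rw [add_sub_cancel_left] at h
    linarith
  have hupp : |t + ℓ| ≤ |ℓ| + 1 := by linarith [abs_add_le t ℓ]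
  exact ⟨Real.rpow_le_rpow_of_nonpos (by linarith) hupp (neg_nonpos.2 hα),
    Real.rpow_le_rpow_of_nonpos (by linarith) hlow (neg_nonpos.2 hα)⟩

theorem abs_add_rpow_neg_mul_abs_add_rpow_neg_mem_Icc {α₁ α₂ s t ℓ : ℝ} (hα₁ : 0 ≤ α₁)
    (hα₂ : 0 ≤ α₂) (hs : |s| ≤ 1) (ht : |t| ≤ 1) (hℓ : 1 < |ℓ|) :
    |s + ℓ| ^ (-α₁) * |t + ℓ| ^ (-α₂) ∈
      Set.Icc ((|ℓ| + 1) ^ (-(α₁ + α₂))) ((|ℓ| - 1) ^ (-(α₁ + α₂))) := by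
  obtain ⟨hs₁, hs₂⟩ := abs_add_rpow_neg_mem_Icc hα₁ hs hℓ
  obtain ⟨ht₁, ht₂⟩ := abs_add_rpow_neg_mem_Icc hα₂ ht hℓ
  rw [neg_add, Real.rpow_add (by linarith), Real.rpow_add (by linarith)]
  exact ⟨mul_le_mul hs₁ ht₁ (by positivity) (by positivity),
    mul_le_mul hs₂ ht₂ (by positivity) (Real.rpow_nonneg (by linarith) _)⟩

theorem setIntegral_mul_mem_Icc {X : Type*} [MeasurableSpace X] {μ : Measure X} {s : Set X}
    (hs : MeasurableSet s) {k w : X → ℝ} {m M : ℝ} (hw : IntegrableOn w s μ)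
    (hkw : IntegrableOn (fun x => k x * w x) s μ) (hw0 : ∀ x ∈ s, 0 ≤ w x)
    (hk : ∀ x ∈ s, k x ∈ Set.Icc m M) :
    ∫ x in s, k x * w x ∂μ ∈ Set.Icc (m * ∫ x in s, w x ∂μ) (M * ∫ x in s, w x ∂μ) := by
  rw [← integral_const_mul, ← integral_const_mul]
  exact ⟨setIntegral_mono_on (hw.const_mul m) hkw hs fun x hx =>
      mul_le_mul_of_nonneg_right (hk x hx).1 (hw0 x hx),
    setIntegral_mono_on hkw (hw.const_mul M) hs fun x hx =>
      mul_le_mul_of_nonneg_right (hk x hx).2 (hw0 x hx)⟩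

theorem abs_setIntegral_kernel_sub_le {α₁ α₂ ℓ : ℝ} (hα₁ : 0 ≤ α₁) (hα₂ : 0 ≤ α₂)
    (hℓ : 1 < |ℓ|) {s : Set (ℝ × ℝ)} (hs : MeasurableSet s)
    (hs₁ : ∀ p ∈ s, ∀ q ∈ s, |p.1 - q.1| ≤ 1 ∧ |p.2 - q.2| ≤ 1)
    {f : ℝ × ℝ → ℝ} (hf₀ : ∀ p ∈ s, 0 ≤ f p) (hf : IntegrableOn f s)
    (hK : IntegrableOn (fun p : (ℝ × ℝ) × (ℝ × ℝ) =>
      |p.1.1 - p.2.1 + ℓ| ^ (-α₁) * |p.1.2 - p.2.2 + ℓ| ^ (-α₂) * f p.1 * f p.2) (s ×ˢ s)) :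
    |(∫ p in s ×ˢ s, |p.1.1 - p.2.1 + ℓ| ^ (-α₁) * |p.1.2 - p.2.2 + ℓ| ^ (-α₂) * f p.1 * f p.2)
        - (∫ p in s, f p) ^ 2 * |ℓ| ^ (-(α₁ + α₂))|
      ≤ (∫ p in s, f p) ^ 2 * ((|ℓ| - 1) ^ (-(α₁ + α₂)) - (|ℓ| + 1) ^ (-(α₁ + α₂))) := by
  have hff : IntegrableOn (fun p : (ℝ × ℝ) × (ℝ × ℝ) => f p.1 * f p.2) (s ×ˢ s) := by
    rw [IntegrableOn, Measure.volume_eq_prod, ← Measure.prod_restrict]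
    exact hf.mul_prod hf
  have hff_integral : ∫ p in s ×ˢ s, f p.1 * f p.2 = (∫ p in s, f p) ^ 2 := by
    rw [Measure.volume_eq_prod, setIntegral_prod_mul, sq]
  have hkernel : ∀ p ∈ s ×ˢ s, |p.1.1 - p.2.1 + ℓ| ^ (-α₁) * |p.1.2 - p.2.2 + ℓ| ^ (-α₂) ∈
      Set.Icc ((|ℓ| + 1) ^ (-(α₁ + α₂))) ((|ℓ| - 1) ^ (-(α₁ + α₂))) := fun p hp =>
    abs_add_rpow_neg_mul_abs_add_rpow_neg_mem_Icc hα₁ hα₂ (hs₁ _ hp.1 _ hp.2).1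
      (hs₁ _ hp.1 _ hp.2).2 hℓ
  obtain ⟨hlo, hhi⟩ := setIntegral_mul_mem_Icc (hs.prod hs) hff
    (by simpa only [mul_assoc] using hK) (fun p hp => mul_nonneg (hf₀ _ hp.1) (hf₀ _ hp.2))
    hkernel
  simp only [hff_integral, ← mul_assoc] at hlo hhi
  obtain ⟨h₀lo, h₀hi⟩ := abs_add_rpow_neg_mem_Icc (t := 0) (add_nonneg hα₁ hα₂) (by simp) hℓ
  rw [zero_add] at h₀lo h₀hi
  have hsq := sq_nonneg (∫ p in s, f p)
  calc _ ≤ (|ℓ| - 1) ^ (-(α₁ + α₂)) * (∫ p in s, f p) ^ 2 -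
        (|ℓ| + 1) ^ (-(α₁ + α₂)) * (∫ p in s, f p) ^ 2 :=
        abs_sub_le_of_le_of_le hlo hhi (by nlinarith) (by nlinarith)
    _ = _ := by ring

theorem stmt_4_general (α₁ α₂ : ℝ) (hα₁ : 0 ≤ α₁) (hα₂ : 0 ≤ α₂)
    (hsum : α₁ + α₂ < 1)
    (F : ℝ → ℝ → ℝ)
    (hFpos : ∀ U V : ℝ, U ∈ Set.Icc (0:ℝ) 1 → V ∈ Set.Icc (0:ℝ) 1 → 0 < F U V)
    -- `γ < ∞` : `F` is integrable on the unit square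
    (hγfin : IntegrableOn (fun p : ℝ × ℝ => F p.1 p.2)
      (Set.Icc (0:ℝ) 1 ×ˢ Set.Icc (0:ℝ) 1))
    (γ : ℝ) (hγ : γ = ∫ p in Set.Icc (0:ℝ) 1 ×ˢ Set.Icc (0:ℝ) 1, F p.1 p.2)
    (Δ : ℤ → ℝ)
    -- `Δ(ℓ) < ∞` : the integrand defining `Δ(ℓ)` is integrable on `[0,1]^4`
    (hΔfin : ∀ ℓ : ℤ, IntegrableOn
      (fun p : (ℝ × ℝ) × (ℝ × ℝ) =>
        |p.1.1 - p.2.1 + (ℓ:ℝ)| ^ (-α₁) * |p.1.2 - p.2.2 + (ℓ:ℝ)| ^ (-α₂) *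
          F p.1.1 p.1.2 * F p.2.1 p.2.2)
      ((Set.Icc (0:ℝ) 1 ×ˢ Set.Icc (0:ℝ) 1) ×ˢ (Set.Icc (0:ℝ) 1 ×ˢ Set.Icc (0:ℝ) 1)))
    (hΔ : ∀ ℓ : ℤ, Δ ℓ =
      ∫ p in (Set.Icc (0:ℝ) 1 ×ˢ Set.Icc (0:ℝ) 1) ×ˢ (Set.Icc (0:ℝ) 1 ×ˢ Set.Icc (0:ℝ) 1),
        |p.1.1 - p.2.1 + (ℓ:ℝ)| ^ (-α₁) * |p.1.2 - p.2.2 + (ℓ:ℝ)| ^ (-α₂) *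
          F p.1.1 p.1.2 * F p.2.1 p.2.2) :
    Tendsto (fun N : ℕ =>
        (N:ℝ) ^ (α₁ + α₂ - 2) * ∑ i ∈ range N, ∑ j ∈ range N, Δ ((i:ℤ) - (j:ℤ)))
      atTop (nhds (2 * γ ^ 2 / ((1 - α₁ - α₂) * (2 - α₁ - α₂)))) := by
  have hsquare : ∀ p ∈ Set.Icc (0:ℝ) 1 ×ˢ Set.Icc (0:ℝ) 1, ∀ q ∈ Set.Icc (0:ℝ) 1 ×ˢ Set.Icc (0:ℝ) 1,
      |p.1 - q.1| ≤ 1 ∧ |p.2 - q.2| ≤ 1 := by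
    rintro p ⟨⟨hp₁, hp₁'⟩, ⟨hp₂, hp₂'⟩⟩ q ⟨⟨hq₁, hq₁'⟩, ⟨hq₂, hq₂'⟩⟩
    exact ⟨abs_sub_le_iff.2 ⟨by linarith, by linarith⟩, abs_sub_le_iff.2 ⟨by linarith, by linarith⟩⟩
  have hbound (ℓ : ℤ) (hℓ : 1 < |(ℓ : ℝ)|) :
      |Δ ℓ - γ ^ 2 * |(ℓ : ℝ)| ^ (-(α₁ + α₂))| ≤
        γ ^ 2 * ((|(ℓ : ℝ)| - 1) ^ (-(α₁ + α₂)) - (|(ℓ : ℝ)| + 1) ^ (-(α₁ + α₂))) := by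
    rw [hΔ ℓ, hγ]
    exact abs_setIntegral_kernel_sub_le hα₁ hα₂ hℓ (measurableSet_Icc.prod measurableSet_Icc)
      hsquare (fun p hp => (hFpos _ _ hp.1 hp.2).le) hγfin (hΔfin ℓ)
  have herr : Summable fun ℓ : ℤ => Δ ℓ - γ ^ 2 * |(ℓ : ℝ)| ^ (-(α₁ + α₂)) := by
    refine Summable.of_norm_bounded_eventually
      ((summable_abs_sub_one_rpow_neg_sub (add_nonneg hα₁ hα₂)).mul_left (γ ^ 2)) ?_
    rw [eventually_cofinite]
    refine (Set.finite_Icc (-1 : ℤ) 1).subset fun ℓ hℓ => ?_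
    by_contra hout
    have h1 : 1 < |ℓ| := lt_abs.2 (by rw [Set.mem_Icc] at hout; omega)
    exact hℓ (hbound ℓ (by exact_mod_cast h1))
  convert tendsto_rpow_mul_sum_range_sum_range_sub (add_nonneg hα₁ hα₂) hsum herr using 3
  ring

theorem stmt_4 (α₁ α₂ : ℝ) (hα₁ : 0 ≤ α₁) (hα₁' : α₁ < 1) (hα₂ : 0 ≤ α₂) (hα₂' : α₂ < 1)
    (hsum : α₁ + α₂ < 1)
    (F : ℝ → ℝ → ℝ) (hFmeas : Measurable (Function.uncurry F))
    (hFpos : ∀ U V : ℝ, U ∈ Set.Icc (0:ℝ) 1 → V ∈ Set.Icc (0:ℝ) 1 → 0 < F U V)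
    -- `γ < ∞` : `F` is integrable on the unit square
    (hγfin : IntegrableOn (fun p : ℝ × ℝ => F p.1 p.2)
      (Set.Icc (0:ℝ) 1 ×ˢ Set.Icc (0:ℝ) 1))
    (γ : ℝ) (hγ : γ = ∫ p in Set.Icc (0:ℝ) 1 ×ˢ Set.Icc (0:ℝ) 1, F p.1 p.2)
    (Δ : ℤ → ℝ)
    -- `Δ(ℓ) < ∞` : the integrand defining `Δ(ℓ)` is integrable on `[0,1]^4`
    (hΔfin : ∀ ℓ : ℤ, IntegrableOn
      (fun p : (ℝ × ℝ) × (ℝ × ℝ) =>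
        |p.1.1 - p.2.1 + (ℓ:ℝ)| ^ (-α₁) * |p.1.2 - p.2.2 + (ℓ:ℝ)| ^ (-α₂) *
          F p.1.1 p.1.2 * F p.2.1 p.2.2)
      ((Set.Icc (0:ℝ) 1 ×ˢ Set.Icc (0:ℝ) 1) ×ˢ (Set.Icc (0:ℝ) 1 ×ˢ Set.Icc (0:ℝ) 1)))
    (hΔ : ∀ ℓ : ℤ, Δ ℓ =
      ∫ p in (Set.Icc (0:ℝ) 1 ×ˢ Set.Icc (0:ℝ) 1) ×ˢ (Set.Icc (0:ℝ) 1 ×ˢ Set.Icc (0:ℝ) 1),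
        |p.1.1 - p.2.1 + (ℓ:ℝ)| ^ (-α₁) * |p.1.2 - p.2.2 + (ℓ:ℝ)| ^ (-α₂) *
          F p.1.1 p.1.2 * F p.2.1 p.2.2) :
    Tendsto (fun N : ℕ =>
        (N:ℝ) ^ (α₁ + α₂ - 2) * ∑ i ∈ range N, ∑ j ∈ range N, Δ ((i:ℤ) - (j:ℤ)))
      atTop (nhds (2 * γ ^ 2 / ((1 - α₁ - α₂) * (2 - α₁ - α₂)))) :=
  stmt_4_general α₁ α₂ hα₁ hα₂ hsum F hFpos hγfin γ hγ Δ hΔfin hΔ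
end

section
/- Let α1, α2, α3, α4 ∈ (0,1) with α1 + α2 + α3 + α4 < 3. Then the integral ∫_{[0,1]^4} |u1-u2|^{-α1} |u2-u3|^{-α2} |u3-u4|^{-α3} |u4-u1|^{-α4} du1 du2 du3 du4 is finite. -/
/-!
Write `x₁, …, x₄` for the four factors `|uᵢ - uᵢ₊₁| ^ (-bᵢ)` (indices mod 4). For weights `lᵢ ≥ 0`
summing to `1`, weighted AM–GM applied to the four products of three of the `xⱼ` gives
`∏ xᵢ ^ (1 - lᵢ) ≤ Σⱼ ∏_{i ≠ j} xᵢ`. Since `Σ (1 - αᵢ) > 1`, the weights `lᵢ` and exponents `bᵢ < 1`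
can be chosen with `αᵢ = bᵢ (1 - lᵢ)`, so the integrand is bounded by a sum of four chain
products, each missing one edge of the cycle `u₁ u₂ u₃ u₄`. Up to a cyclic relabelling of the
variables each chain is `|u₁ - u₂| ^ (-b) |u₂ - u₃| ^ (-c) |u₃ - u₄| ^ (-d)`, whose integral is at
most the product of the three integrals of `|t| ^ (-b)` over `[-1, 1]`: integrate out `u₄`, then
`u₃`, then `u₂`.
-/

open MeasureTheory Set Finset
open scoped ENNReal

theorem prod_rpow_one_sub_le_sum_prod_erase {ι : Type*} [Fintype ι] [DecidableEq ι]
    {X l : ι → ℝ} (hX : ∀ i, 0 ≤ X i) (hl : ∀ i, 0 ≤ l i) (hl_sum : ∑ i, l i = 1) :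
    ∏ i, X i ^ (1 - l i) ≤ ∑ j, ∏ i ∈ univ.erase j, X i :=
  calc ∏ i, X i ^ (1 - l i) = ∏ j, (∏ i ∈ univ.erase j, X i) ^ l j := by
        have hl_erase : ∀ i, 1 - l i = ∑ j ∈ univ.erase i, l j := fun i => by
          rw [← hl_sum, sum_erase_eq_sub (mem_univ i)]
        simp_rw [hl_erase, Real.rpow_sum_of_nonneg (hX _) (fun j _ => hl j),
          ← Real.finsetProd_rpow _ _ (fun i _ => hX i)]
        exact prod_comm' (by simp [ne_comm])
    _ ≤ ∑ j, l j * ∏ i ∈ univ.erase j, X i :=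
        Real.geom_mean_le_arith_mean_weighted _ _ _ (fun j _ => hl j) hl_sum
          fun j _ => prod_nonneg fun i _ => hX i
    _ ≤ ∑ j, ∏ i ∈ univ.erase j, X i := sum_le_sum fun j _ =>
        mul_le_of_le_one_left (prod_nonneg fun i _ => hX i)
          (hl_sum ▸ single_le_sum (fun i _ => hl i) (mem_univ j))

theorem rpow_one_sub_mul_le_cyclic_sum {x y z w : ℝ} (hx : 0 ≤ x) (hy : 0 ≤ y) (hz : 0 ≤ z)
    (hw : 0 ≤ w) {l : Fin 4 → ℝ} (hl : ∀ i, 0 ≤ l i) (hl_sum : ∑ i, l i = 1) :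
    x ^ (1 - l 0) * y ^ (1 - l 1) * z ^ (1 - l 2) * w ^ (1 - l 3) ≤
      x * y * z + y * z * w + z * w * x + w * x * y := by
  have h := prod_rpow_one_sub_le_sum_prod_erase (X := ![x, y, z, w])
    (fun i => by fin_cases i <;> assumption) hl hl_sum
  rw [Fin.sum_univ_four, show univ.erase (0 : Fin 4) = {1, 2, 3} by decide,
    show univ.erase (1 : Fin 4) = {0, 2, 3} by decide,
    show univ.erase (2 : Fin 4) = {0, 1, 3} by decide,
    show univ.erase (3 : Fin 4) = {0, 1, 2} by decide] at h
  simp only [Fin.prod_univ_four, Finset.prod_insert, Finset.mem_insert, Finset.mem_singleton,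
    Finset.prod_singleton, Matrix.cons_val, Fin.reduceEq, or_self, not_false_eq_true] at h
  linarith

theorem exists_weights_eq_mul_one_sub {ι : Type*} [Fintype ι] [Nontrivial ι] {α : ι → ℝ}
    (hα : ∀ i, α i < 1) (hsum : ∑ i, α i < Fintype.card ι - 1) :
    ∃ l b : ι → ℝ, (∀ i, 0 ≤ l i) ∧ ∑ i, l i = 1 ∧ (∀ i, b i < 1) ∧
      ∀ i, α i = b i * (1 - l i) := by
  set s := ∑ i, (1 - α i)
  have hs : 1 < s := by
    simp only [s, sum_sub_distrib, sum_const, card_univ, nsmul_eq_mul, mul_one]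
    linarith
  set l := fun i => (1 - α i) / s
  have hl_pos : ∀ i, 0 < l i := fun i => div_pos (sub_pos.2 (hα i)) (by linarith)
  have hl_sum : ∑ i, l i = 1 := by rw [← sum_div]; exact div_self (by linarith)
  have hl_lt : ∀ i, l i < 1 := fun i => by
    classical
    obtain ⟨j, hj⟩ := exists_ne i
    have := single_le_sum (fun k _ => (hl_pos k).le) (mem_erase.2 ⟨hj, mem_univ j⟩)
    rw [sum_erase_eq_sub (mem_univ i), hl_sum] at this
    linarith [hl_pos j]
  refine ⟨l, fun i => α i / (1 - l i), fun i => (hl_pos i).le, hl_sum, fun i => ?_, fun i => ?_⟩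
  · rw [div_lt_one (sub_pos.2 (hl_lt i))]
    linarith [div_lt_self (sub_pos.2 (hα i)) hs]
  · exact (div_mul_cancel₀ _ (sub_pos.2 (hl_lt i)).ne').symm

theorem setLIntegral_Icc_abs_rpow_neg_lt_top {b : ℝ} (hb : b < 1) :
    ∫⁻ t in Icc (-1 : ℝ) 1, ENNReal.ofReal (|t| ^ (-b)) < ⊤ := by
  have : LocallyIntegrable (fun t : ℝ => |t| ^ (-b)) :=
    locallyIntegrable_of_norm_le_rpow (μ := volume) (C := 1) (α := b) (by simp) (by simpa)
      (ae_of_all _ fun t => by simp [abs_of_nonneg (Real.rpow_nonneg (abs_nonneg t) _)])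
      (by fun_prop : Measurable _).aestronglyMeasurable
  exact (this.integrableOn_isCompact isCompact_Icc).lintegral_lt_top

theorem setLIntegral_Icc_const_mul_comp_sub_le {k : ℝ → ℝ≥0∞} (hk : Measurable k) (c : ℝ≥0∞)
    {x : ℝ} (hx : x ∈ Icc (0 : ℝ) 1) :
    ∫⁻ y in Icc 0 1, c * k (x - y) ≤ c * ∫⁻ t in Icc (-1) 1, k t := by
  rw [lintegral_const_mul _ (by fun_prop),
    (Measure.measurePreserving_sub_left volume x).setLIntegral_comp_emb
      (MeasurableEquiv.subLeft x).measurableEmbedding, image_const_sub_Icc]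
  gcongr <;> linarith [hx.1, hx.2]

theorem setLIntegral_cube_chain_le {k₁ k₂ k₃ : ℝ → ℝ≥0∞} (hk₁ : Measurable k₁)
    (hk₂ : Measurable k₂) (hk₃ : Measurable k₃) :
    ∫⁻ p in Icc (0 : ℝ) 1 ×ˢ (Icc (0 : ℝ) 1 ×ˢ (Icc (0 : ℝ) 1 ×ˢ Icc (0 : ℝ) 1)),
        k₁ (p.1 - p.2.1) * k₂ (p.2.1 - p.2.2.1) * k₃ (p.2.2.1 - p.2.2.2) ≤
      (∫⁻ t in Icc (-1) 1, k₁ t) * (∫⁻ t in Icc (-1) 1, k₂ t) * ∫⁻ t in Icc (-1) 1, k₃ t := by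
  set I := Icc (0 : ℝ) 1
  set K₁ := ∫⁻ t in Icc (-1) 1, k₁ t
  set K₂ := ∫⁻ t in Icc (-1) 1, k₂ t
  set K₃ := ∫⁻ t in Icc (-1) 1, k₃ t
  have h₃ : ∀ u₁ u₂, ∀ u₃ ∈ I, ∫⁻ u₄ in I, k₁ (u₁ - u₂) * k₂ (u₂ - u₃) * k₃ (u₃ - u₄) ≤
      k₁ (u₁ - u₂) * k₂ (u₂ - u₃) * K₃ :=
    fun _ _ _ hu₃ => setLIntegral_Icc_const_mul_comp_sub_le hk₃ _ hu₃
  have h₂ : ∀ u₁, ∀ u₂ ∈ I,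
      ∫⁻ u₃ in I, ∫⁻ u₄ in I, k₁ (u₁ - u₂) * k₂ (u₂ - u₃) * k₃ (u₃ - u₄) ≤
        k₁ (u₁ - u₂) * K₃ * K₂ := fun u₁ u₂ hu₂ =>
    calc _ ≤ ∫⁻ u₃ in I, k₁ (u₁ - u₂) * K₃ * k₂ (u₂ - u₃) :=
          setLIntegral_mono (by fun_prop) fun u₃ hu₃ => (h₃ u₁ u₂ u₃ hu₃).trans_eq (by ring)
      _ ≤ _ := setLIntegral_Icc_const_mul_comp_sub_le hk₂ _ hu₂
  have h₁ : ∀ u₁ ∈ I,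
      ∫⁻ u₂ in I, ∫⁻ u₃ in I, ∫⁻ u₄ in I, k₁ (u₁ - u₂) * k₂ (u₂ - u₃) * k₃ (u₃ - u₄) ≤
        K₃ * K₂ * K₁ := fun u₁ hu₁ =>
    calc _ ≤ ∫⁻ u₂ in I, K₃ * K₂ * k₁ (u₁ - u₂) :=
          setLIntegral_mono (by fun_prop) fun u₂ hu₂ => (h₂ u₁ u₂ hu₂).trans_eq (by ring)
      _ ≤ _ := setLIntegral_Icc_const_mul_comp_sub_le hk₁ _ hu₁
  rw [Measure.volume_eq_prod, setLIntegral_prod _ (by fun_prop)]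
  calc _ ≤ ∫⁻ _ in I, K₃ * K₂ * K₁ := setLIntegral_mono measurable_const fun u₁ hu₁ => by
          rw [Measure.volume_eq_prod, setLIntegral_prod _ (by fun_prop)]
          refine le_of_eq_of_le (lintegral_congr fun u₂ => ?_) (h₁ u₁ hu₁)
          rw [Measure.volume_eq_prod, setLIntegral_prod _ (by fun_prop)]
    _ = K₁ * K₂ * K₃ := by
      rw [setLIntegral_const, Real.volume_Icc, sub_zero, ENNReal.ofReal_one, mul_one]
      ring

section Rotation

variable {α : Type*} [MeasurableSpace α]

def rotate4 (p : α × α × α × α) : α × α × α × α := (p.2.1, p.2.2.1, p.2.2.2, p.1)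

theorem measurable_rotate4 : Measurable (rotate4 : α × α × α × α → α × α × α × α) := by
  unfold rotate4
  fun_prop

theorem measurePreserving_rotate4 (μ : Measure α) [SFinite μ] :
    MeasurePreserving rotate4 (μ.prod (μ.prod (μ.prod μ))) (μ.prod (μ.prod (μ.prod μ))) :=
  ((MeasurePreserving.id μ).prod (measurePreserving_prodAssoc μ μ μ)).comp
    ((measurePreserving_prodAssoc μ (μ.prod μ) μ).comp Measure.measurePreserving_swap)

theorem setLIntegral_comp_iterate_rotate4 (μ : Measure α) [SFinite μ] (s : Set α)
    {f : α × α × α × α → ℝ≥0∞} (hf : Measurable f) (n : ℕ) :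
    ∫⁻ p in s ×ˢ (s ×ˢ (s ×ˢ s)), f (rotate4^[n] p) ∂(μ.prod (μ.prod (μ.prod μ))) =
      ∫⁻ p in s ×ˢ (s ×ˢ (s ×ˢ s)), f p ∂(μ.prod (μ.prod (μ.prod μ))) := by
  simp only [← Measure.prod_restrict]
  exact ((measurePreserving_rotate4 _).iterate n).lintegral_comp hf

end Rotation

noncomputable def cycleWeight (a₁ a₂ a₃ a₄ : ℝ) (p : ℝ × ℝ × ℝ × ℝ) : ℝ≥0∞ :=
  ENNReal.ofReal (|p.1 - p.2.1| ^ (-a₁) * |p.2.1 - p.2.2.1| ^ (-a₂) *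
    |p.2.2.1 - p.2.2.2| ^ (-a₃) * |p.2.2.2 - p.1| ^ (-a₄))

noncomputable def chainWeight (b c d : ℝ) (p : ℝ × ℝ × ℝ × ℝ) : ℝ≥0∞ :=
  ENNReal.ofReal (|p.1 - p.2.1| ^ (-b) * |p.2.1 - p.2.2.1| ^ (-c) * |p.2.2.1 - p.2.2.2| ^ (-d))

theorem measurable_chainWeight (b c d : ℝ) : Measurable (chainWeight b c d) := by
  unfold chainWeight
  fun_prop

theorem setLIntegral_chainWeight_comp_iterate_rotate4_lt_top {b c d : ℝ} (hb : b < 1)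
    (hc : c < 1) (hd : d < 1) (n : ℕ) :
    ∫⁻ p in Icc (0 : ℝ) 1 ×ˢ (Icc (0 : ℝ) 1 ×ˢ (Icc (0 : ℝ) 1 ×ˢ Icc (0 : ℝ) 1)),
      chainWeight b c d (rotate4^[n] p) < ⊤ := by
  refine (setLIntegral_comp_iterate_rotate4 volume _ (measurable_chainWeight b c d) n).trans_lt ?_
  have hk : ∀ a : ℝ, Measurable fun t : ℝ => ENNReal.ofReal (|t| ^ (-a)) := fun a => by fun_prop
  refine lt_of_le_of_lt (le_of_eq_of_le ?_ (setLIntegral_cube_chain_le (hk b) (hk c) (hk d)))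
    (ENNReal.mul_lt_top (ENNReal.mul_lt_top (setLIntegral_Icc_abs_rpow_neg_lt_top hb)
      (setLIntegral_Icc_abs_rpow_neg_lt_top hc)) (setLIntegral_Icc_abs_rpow_neg_lt_top hd))
  refine lintegral_congr fun p => ?_
  simp only [chainWeight]
  rw [ENNReal.ofReal_mul (by positivity), ENNReal.ofReal_mul (by positivity)]

theorem cycleWeight_le_sum_chainWeight {l b : Fin 4 → ℝ} (hl : ∀ i, 0 ≤ l i)
    (hl_sum : ∑ i, l i = 1) (p : ℝ × ℝ × ℝ × ℝ) :
    cycleWeight (b 0 * (1 - l 0)) (b 1 * (1 - l 1)) (b 2 * (1 - l 2)) (b 3 * (1 - l 3)) p ≤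
      ∑ k : Fin 4, chainWeight (b k) (b (k + 1)) (b (k + 2)) (rotate4^[k] p) := by
  simp only [cycleWeight, ← neg_mul, Real.rpow_mul (abs_nonneg _)]
  refine (ENNReal.ofReal_le_ofReal (rpow_one_sub_mul_le_cyclic_sum (by positivity)
    (by positivity) (by positivity) (by positivity) hl hl_sum)).trans_eq ?_
  rw [ENNReal.ofReal_add (by positivity) (by positivity),
    ENNReal.ofReal_add (by positivity) (by positivity),
    ENNReal.ofReal_add (by positivity) (by positivity), Fin.sum_univ_four]
  -- the `k`-th chain, read at `rotate4^[k] p`, is the cycle with its `(k + 3)`-rd edge removed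
  rfl

theorem stmt_9 (α₁ α₂ α₃ α₄ : ℝ) (h₁ : α₁ ∈ Set.Ioo (0:ℝ) 1) (h₂ : α₂ ∈ Set.Ioo (0:ℝ) 1)
    (h₃ : α₃ ∈ Set.Ioo (0:ℝ) 1) (h₄ : α₄ ∈ Set.Ioo (0:ℝ) 1)
    (hsum : α₁ + α₂ + α₃ + α₄ < 3) :
    (∫⁻ p in Set.Icc (0:ℝ) 1 ×ˢ (Set.Icc (0:ℝ) 1 ×ˢ (Set.Icc (0:ℝ) 1 ×ˢ Set.Icc (0:ℝ) 1)),
        ENNReal.ofReal (|p.1 - p.2.1| ^ (-α₁) * |p.2.1 - p.2.2.1| ^ (-α₂) *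
          |p.2.2.1 - p.2.2.2| ^ (-α₃) * |p.2.2.2 - p.1| ^ (-α₄))) < ⊤ := by
  obtain ⟨l, b, hl, hl_sum, hb, hα⟩ :=
    exists_weights_eq_mul_one_sub (α := (![α₁, α₂, α₃, α₄] : Fin 4 → ℝ))
    (fun i => by fin_cases i; exacts [h₁.2, h₂.2, h₃.2, h₄.2])
    (by
      rw [Fin.sum_univ_four, Fintype.card_fin]
      change α₁ + α₂ + α₃ + α₄ < (4 : ℕ) - 1
      push_cast
      linarith)
  change ∫⁻ p in _, cycleWeight α₁ α₂ α₃ α₄ p < ⊤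
  rw [show α₁ = _ from hα 0, show α₂ = _ from hα 1, show α₃ = _ from hα 2,
    show α₄ = _ from hα 3]
  refine (lintegral_mono (cycleWeight_le_sum_chainWeight hl hl_sum)).trans_lt ?_
  have hmeas (k : Fin 4) :
      Measurable fun p => chainWeight (b k) (b (k + 1)) (b (k + 2)) (rotate4^[k] p) :=
    (measurable_chainWeight _ _ _).comp (measurable_rotate4.iterate k)
  rw [lintegral_finsetSum _ fun k _ => hmeas k]
  exact ENNReal.sum_lt_top.2 fun k _ =>
    setLIntegral_chainWeight_comp_iterate_rotate4_lt_top (hb _) (hb _) (hb _) k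
end

section
/- Let α1, α2, α3, α4 ∈ (0,1) and let ε ∈ {-1, 1}. Then the integral ∫_{[0,1]^4} |u1-u2+ε|^{-α1} |u2-u3+ε|^{-α2} |u3-u4|^{-α3} |u4-u1|^{-α4} du1 du2 du3 du4 is finite. -/
/-!
For `x, y, z ∈ [0,1]` the shifted factors are singular only at the boundary:
`|x - y + ε| ≥ |y - c|` and `|y - z + ε| ≥ |y - c'|` with `{c, c'} = {0, 1}`, and since one of
`|y - c|`, `|y - c'|` is at least `1/2`, their product is dominated by a sum of single powers of
`y`. Likewise `|z - x| ≤ |z - w| + |w - x|` forces one of the cyclic distances to be at least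
`|z - x| / 2`, which dominates `|z - w|^{-α₃} |w - x|^{-α₄}` by a sum of products of
one-variable singularities. The majorant is integrated one variable at a time (Tonelli), and each
`∫₀¹ |t - c|^{-α} dt` with `c ∈ [0,1]` is at most `∫_{-1}^{1} |t|^{-α} dt < ∞`.
-/

open MeasureTheory Set

namespace ENNReal

theorem rpow_neg_le_rpow_neg {x y : ENNReal} {α : ℝ} (hα : 0 ≤ α) (hxy : x ≤ y) :
    y ^ (-α) ≤ x ^ (-α) := by
  rw [rpow_neg, rpow_neg]
  exact ENNReal.inv_le_inv.2 (rpow_le_rpow hxy hα)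

theorem div_two_rpow_neg (r : ENNReal) {α : ℝ} (hα : 0 ≤ α) :
    (r / 2) ^ (-α) = 2 ^ α * r ^ (-α) := by
  rw [rpow_neg, div_rpow_of_nonneg _ _ hα, ENNReal.inv_div (Or.inl (by finiteness))
    (Or.inl (rpow_pos (by norm_num) ofNat_ne_top).ne'), div_eq_mul_inv, ← rpow_neg]

theorem rpow_neg_mul_rpow_neg_le_of_le_add {u v r : ENNReal} {α β : ℝ} (hα : 0 ≤ α) (hβ : 0 ≤ β)
    (h : r ≤ u + v) :
    u ^ (-α) * v ^ (-β) ≤ 2 ^ α * r ^ (-α) * v ^ (-β) + 2 ^ β * u ^ (-α) * r ^ (-β) := by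
  by_cases hu : r / 2 ≤ u
  · calc u ^ (-α) * v ^ (-β) ≤ (r / 2) ^ (-α) * v ^ (-β) :=
          mul_le_mul' (rpow_neg_le_rpow_neg hα hu) le_rfl
      _ = 2 ^ α * r ^ (-α) * v ^ (-β) := by rw [div_two_rpow_neg r hα]
      _ ≤ _ := le_self_add
  · have hv : r / 2 ≤ v := by
      by_contra hv
      have := ENNReal.add_lt_add (not_le.1 hu) (not_le.1 hv)
      rw [ENNReal.add_halves] at this
      exact (h.trans_lt this).false
    calc u ^ (-α) * v ^ (-β) ≤ u ^ (-α) * (r / 2) ^ (-β) :=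
          mul_le_mul' le_rfl (rpow_neg_le_rpow_neg hβ hv)
      _ = 2 ^ β * u ^ (-α) * r ^ (-β) := by rw [div_two_rpow_neg r hβ]; ring
      _ ≤ _ := le_add_self

/-- The real power `|a| ^ α` is junk (`0`) at `a = 0` for `α ≠ 0`; the majorants below use
`‖a‖ₑ ^ α ∈ ℝ≥0∞`, which is `⊤` there, so that the splitting inequalities hold everywhere. -/
theorem ofReal_abs_rpow_le_enorm_rpow (a α : ℝ) : ENNReal.ofReal (|a| ^ α) ≤ ‖a‖ₑ ^ α := by
  rcases eq_or_ne a 0 with rfl | ha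
  · rcases lt_trichotomy α 0 with hα | rfl | hα
    · simp [Real.zero_rpow hα.ne]
    · simp
    · simp [Real.zero_rpow hα.ne', ENNReal.zero_rpow_of_pos hα]
  · rw [Real.enorm_eq_ofReal_abs, ENNReal.ofReal_rpow_of_pos (abs_pos.2 ha)]

end ENNReal

theorem lintegral_enorm_rpow_neg_lt_top {E : Type*} [NormedAddCommGroup E] [NormedSpace ℝ E]
    [Nontrivial E] [FiniteDimensional ℝ E] [MeasurableSpace E] [BorelSpace E]
    (μ : Measure E) [μ.IsAddHaarMeasure] {α : ℝ} (hα : α < Module.finrank ℝ E)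
    {K : Set E} (hK : IsCompact K) : ∫⁻ x in K, ‖x‖ₑ ^ (-α) ∂μ < ⊤ := by
  have hmeas : Measurable fun x : E ↦ ‖x‖ ^ (-α) := by fun_prop
  have hint : IntegrableOn (fun x : E ↦ ‖x‖ ^ (-α)) K μ :=
    (locallyIntegrable_of_norm_le_rpow (Module.finrank_pos (R := ℝ) (M := E)) hα (C := 1)
      (ae_of_all _ fun x ↦ by simp [abs_of_nonneg (Real.rpow_nonneg (norm_nonneg x) _)])
      hmeas.aestronglyMeasurable).integrableOn_isCompact hK
  refine (lintegral_congr_ae ?_).trans_lt hint.2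
  filter_upwards [ae_restrict_of_ae (Measure.ae_ne μ 0)] with x hx
  rw [Real.enorm_of_nonneg (Real.rpow_nonneg (norm_nonneg x) _), ← ofReal_norm,
    ENNReal.ofReal_rpow_of_pos (norm_pos_iff.2 hx)]

theorem setLIntegral_Icc_comp_sub_le {c : ℝ} (hc : c ∈ Icc (0 : ℝ) 1) (f : ℝ → ENNReal) :
    ∫⁻ x in Icc 0 1, f (x - c) ≤ ∫⁻ t in Icc (-1) 1, f t := by
  calc ∫⁻ x in Icc 0 1, f (x - c) ≤ ∫⁻ x in (· - c) ⁻¹' Icc (-1) 1, f (x - c) := by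
        refine lintegral_mono_set fun x hx ↦ ?_
        rw [preimage_sub_const_Icc]
        exact ⟨by linarith [hx.1, hc.2], by linarith [hx.2, hc.1]⟩
    _ = ∫⁻ t in Icc (-1) 1, f t :=
        (measurePreserving_sub_right volume c).setLIntegral_comp_preimage_emb
          (measurableEmbedding_subRight c) f _

theorem setLIntegral_prod_le {α β : Type*} [MeasureSpace α] [MeasureSpace β]
    [SFinite (volume : Measure α)] [SFinite (volume : Measure β)] (s : Set α) (t : Set β)
    (f : α × β → ENNReal) :
    ∫⁻ p in s ×ˢ t, f p ≤ ∫⁻ a in s, ∫⁻ b in t, f (a, b) := by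
  rw [Measure.volume_eq_prod, ← Measure.prod_restrict]
  exact lintegral_prod_le f

theorem setLIntegral_prod_mul {α β : Type*} [MeasureSpace α] [MeasureSpace β]
    [SFinite (volume : Measure α)] [SFinite (volume : Measure β)] {s : Set α} {t : Set β}
    {f : α → ENNReal} {g : β → ENNReal} (hf : AEMeasurable f (volume.restrict s))
    (hg : AEMeasurable g (volume.restrict t)) :
    ∫⁻ p in s ×ˢ t, f p.1 * g p.2 = (∫⁻ a in s, f a) * ∫⁻ b in t, g b := by
  rw [Measure.volume_eq_prod, ← Measure.prod_restrict]
  exact lintegral_prod_mul hf hg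

noncomputable def kernelMass (α : ℝ) : ENNReal := ∫⁻ t in Icc (-1 : ℝ) 1, ‖t‖ₑ ^ (-α)

theorem kernelMass_lt_top {α : ℝ} (hα : α < 1) : kernelMass α < ⊤ :=
  lintegral_enorm_rpow_neg_lt_top volume (by simpa using hα) isCompact_Icc

theorem setLIntegral_const_mul_enorm_sub_rpow_le {c : ℝ} (hc : c ∈ Icc (0 : ℝ) 1) (a : ENNReal)
    (α : ℝ) : ∫⁻ x in Icc 0 1, a * ‖x - c‖ₑ ^ (-α) ≤ a * kernelMass α := by
  rw [lintegral_const_mul _ (by fun_prop)]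
  exact mul_le_mul' le_rfl (setLIntegral_Icc_comp_sub_le hc (‖·‖ₑ ^ (-α)))

theorem abs_sub_le_of_sign {ε x y z : ℝ} (hε : ε = -1 ∨ ε = 1) (hx : x ∈ Icc (0 : ℝ) 1)
    (hy : y ∈ Icc (0 : ℝ) 1) (hz : z ∈ Icc (0 : ℝ) 1) :
    |y - (1 + ε) / 2| ≤ |x - y + ε| ∧ |y - (1 - ε) / 2| ≤ |y - z + ε| := by
  obtain ⟨hx0, hx1⟩ := hx
  obtain ⟨hy0, hy1⟩ := hy
  obtain ⟨hz0, hz1⟩ := hz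
  rcases hε with rfl | rfl <;> constructor <;> norm_num [abs_le, le_abs] <;> grind

section Majorant

variable (α₁ α₂ α₃ α₄ ε : ℝ)

/-- `(1 + ε) / 2` and `(1 - ε) / 2` are the endpoints of `[0,1]` near which `|x - y + ε|` and
`|y - z + ε|` can vanish. -/
noncomputable def crossMajorant (y : ℝ) : ENNReal :=
  2 ^ α₁ * ‖y - (1 - ε) / 2‖ₑ ^ (-α₂) + 2 ^ α₂ * ‖y - (1 + ε) / 2‖ₑ ^ (-α₁)

noncomputable def cycleMajorant (x z w : ℝ) : ENNReal :=
  2 ^ α₃ * ‖z - x‖ₑ ^ (-α₃) * ‖w - x‖ₑ ^ (-α₄) + 2 ^ α₄ * ‖z - x‖ₑ ^ (-α₄) * ‖w - z‖ₑ ^ (-α₃)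

variable {α₁ α₂ α₃ α₄ ε}

@[fun_prop]
theorem Measurable.crossMajorant {X : Type*} [MeasurableSpace X] {f : X → ℝ}
    (hf : Measurable f) : Measurable fun a ↦ crossMajorant α₁ α₂ ε (f a) := by
  unfold _root_.crossMajorant; fun_prop

@[fun_prop]
theorem Measurable.cycleMajorant {X : Type*} [MeasurableSpace X] {f g h : X → ℝ}
    (hf : Measurable f) (hg : Measurable g) (hh : Measurable h) :
    Measurable fun a ↦ cycleMajorant α₃ α₄ (f a) (g a) (h a) := by
  unfold _root_.cycleMajorant; fun_prop

theorem cross_le_crossMajorant (hα₁ : 0 ≤ α₁) (hα₂ : 0 ≤ α₂) (hε : ε = -1 ∨ ε = 1)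
    {x y z : ℝ} (hx : x ∈ Icc (0 : ℝ) 1) (hy : y ∈ Icc (0 : ℝ) 1) (hz : z ∈ Icc (0 : ℝ) 1) :
    ‖x - y + ε‖ₑ ^ (-α₁) * ‖y - z + ε‖ₑ ^ (-α₂) ≤ crossMajorant α₁ α₂ ε y := by
  obtain ⟨h₁, h₂⟩ := abs_sub_le_of_sign hε hx hy hz
  have hsum : ‖(1 : ℝ)‖ₑ ≤ ‖y - (1 + ε) / 2‖ₑ + ‖y - (1 - ε) / 2‖ₑ := by
    have hnorm : ‖(1 : ℝ)‖ₑ = ‖(y - (1 - ε) / 2) - (y - (1 + ε) / 2)‖ₑ := by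
      rcases hε with rfl | rfl <;> norm_num
    rw [hnorm]
    exact enorm_sub_le.trans_eq (add_comm _ _)
  calc ‖x - y + ε‖ₑ ^ (-α₁) * ‖y - z + ε‖ₑ ^ (-α₂)
      ≤ ‖y - (1 + ε) / 2‖ₑ ^ (-α₁) * ‖y - (1 - ε) / 2‖ₑ ^ (-α₂) :=
        mul_le_mul' (ENNReal.rpow_neg_le_rpow_neg hα₁ (enorm_le_iff_norm_le.2 h₁))
          (ENNReal.rpow_neg_le_rpow_neg hα₂ (enorm_le_iff_norm_le.2 h₂))
    _ ≤ _ := ENNReal.rpow_neg_mul_rpow_neg_le_of_le_add hα₁ hα₂ hsum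
    _ = crossMajorant α₁ α₂ ε y := by simp [crossMajorant]

theorem cycle_le_cycleMajorant (hα₃ : 0 ≤ α₃) (hα₄ : 0 ≤ α₄) (x z w : ℝ) :
    ‖z - w‖ₑ ^ (-α₃) * ‖w - x‖ₑ ^ (-α₄) ≤ cycleMajorant α₃ α₄ x z w := by
  have htri : ‖z - x‖ₑ ≤ ‖z - w‖ₑ + ‖w - x‖ₑ := by
    simpa using enorm_add_le (z - w) (w - x)
  calc ‖z - w‖ₑ ^ (-α₃) * ‖w - x‖ₑ ^ (-α₄) ≤ _ :=
        ENNReal.rpow_neg_mul_rpow_neg_le_of_le_add hα₃ hα₄ htri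
    _ = cycleMajorant α₃ α₄ x z w := by
        rw [cycleMajorant, enorm_sub_rev z w]; ring

theorem lintegral_crossMajorant_le (hε : ε = -1 ∨ ε = 1) :
    ∫⁻ y in Icc 0 1, crossMajorant α₁ α₂ ε y ≤
      2 ^ α₁ * kernelMass α₂ + 2 ^ α₂ * kernelMass α₁ := by
  have hc : (1 - ε) / 2 ∈ Icc (0 : ℝ) 1 ∧ (1 + ε) / 2 ∈ Icc (0 : ℝ) 1 := by
    rcases hε with rfl | rfl <;> norm_num
  simp only [crossMajorant]
  rw [lintegral_add_left (by fun_prop)]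
  exact add_le_add (setLIntegral_const_mul_enorm_sub_rpow_le hc.1 _ _)
    (setLIntegral_const_mul_enorm_sub_rpow_le hc.2 _ _)

theorem lintegral_cycleMajorant_le {x : ℝ} (hx : x ∈ Icc (0 : ℝ) 1) :
    ∫⁻ q in Icc 0 1 ×ˢ Icc 0 1, cycleMajorant α₃ α₄ x q.1 q.2 ≤
      2 ^ α₃ * kernelMass α₃ * kernelMass α₄ + 2 ^ α₄ * kernelMass α₄ * kernelMass α₃ := by
  calc ∫⁻ q in Icc 0 1 ×ˢ Icc 0 1, cycleMajorant α₃ α₄ x q.1 q.2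
      ≤ ∫⁻ z in Icc 0 1, ∫⁻ w in Icc 0 1, cycleMajorant α₃ α₄ x z w :=
        setLIntegral_prod_le _ _ _
    _ ≤ ∫⁻ z in Icc 0 1, (2 ^ α₃ * kernelMass α₄ * ‖z - x‖ₑ ^ (-α₃) +
          2 ^ α₄ * kernelMass α₃ * ‖z - x‖ₑ ^ (-α₄)) := by
        refine setLIntegral_mono' measurableSet_Icc fun z hz ↦ ?_
        simp only [cycleMajorant]
        rw [lintegral_add_left (by fun_prop)]
        refine (add_le_add (setLIntegral_const_mul_enorm_sub_rpow_le hx _ α₄)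
          (setLIntegral_const_mul_enorm_sub_rpow_le hz _ α₃)).trans_eq (by ring)
    _ ≤ _ := by
        rw [lintegral_add_left (by fun_prop)]
        refine (add_le_add (setLIntegral_const_mul_enorm_sub_rpow_le hx _ α₃)
          (setLIntegral_const_mul_enorm_sub_rpow_le hx _ α₄)).trans_eq (by ring)

theorem ofReal_integrand_le_majorant (hα₁ : 0 ≤ α₁) (hα₂ : 0 ≤ α₂) (hα₃ : 0 ≤ α₃) (hα₄ : 0 ≤ α₄)
    (hε : ε = -1 ∨ ε = 1) {x y z w : ℝ} (hx : x ∈ Icc (0 : ℝ) 1) (hy : y ∈ Icc (0 : ℝ) 1)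
    (hz : z ∈ Icc (0 : ℝ) 1) :
    ENNReal.ofReal (|x - y + ε| ^ (-α₁) * |y - z + ε| ^ (-α₂) * |z - w| ^ (-α₃) *
        |w - x| ^ (-α₄)) ≤
      crossMajorant α₁ α₂ ε y * cycleMajorant α₃ α₄ x z w := by
  rw [ENNReal.ofReal_mul (by positivity), ENNReal.ofReal_mul (by positivity),
    ENNReal.ofReal_mul (by positivity)]
  calc _ ≤ ‖x - y + ε‖ₑ ^ (-α₁) * ‖y - z + ε‖ₑ ^ (-α₂) * ‖z - w‖ₑ ^ (-α₃) *
        ‖w - x‖ₑ ^ (-α₄) := by gcongr <;> exact ENNReal.ofReal_abs_rpow_le_enorm_rpow _ _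
    _ = (‖x - y + ε‖ₑ ^ (-α₁) * ‖y - z + ε‖ₑ ^ (-α₂)) *
        (‖z - w‖ₑ ^ (-α₃) * ‖w - x‖ₑ ^ (-α₄)) := by ring
    _ ≤ _ := mul_le_mul' (cross_le_crossMajorant hα₁ hα₂ hε hx hy hz)
        (cycle_le_cycleMajorant hα₃ hα₄ x z w)

end Majorant

theorem stmt_10 (α₁ α₂ α₃ α₄ ε : ℝ) (h₁ : α₁ ∈ Set.Ioo (0:ℝ) 1) (h₂ : α₂ ∈ Set.Ioo (0:ℝ) 1)
    (h₃ : α₃ ∈ Set.Ioo (0:ℝ) 1) (h₄ : α₄ ∈ Set.Ioo (0:ℝ) 1)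
    (hε : ε = -1 ∨ ε = 1) :
    (∫⁻ p in Set.Icc (0:ℝ) 1 ×ˢ (Set.Icc (0:ℝ) 1 ×ˢ (Set.Icc (0:ℝ) 1 ×ˢ Set.Icc (0:ℝ) 1)),
        ENNReal.ofReal (|p.1 - p.2.1 + ε| ^ (-α₁) * |p.2.1 - p.2.2.1 + ε| ^ (-α₂) *
          |p.2.2.1 - p.2.2.2| ^ (-α₃) * |p.2.2.2 - p.1| ^ (-α₄))) < ⊤ := by
  set I := Icc (0 : ℝ) 1
  set A := 2 ^ α₁ * kernelMass α₂ + 2 ^ α₂ * kernelMass α₁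
  set B := 2 ^ α₃ * kernelMass α₃ * kernelMass α₄ + 2 ^ α₄ * kernelMass α₄ * kernelMass α₃
  calc _ ≤ ∫⁻ p in I ×ˢ (I ×ˢ (I ×ˢ I)),
          crossMajorant α₁ α₂ ε p.2.1 * cycleMajorant α₃ α₄ p.1 p.2.2.1 p.2.2.2 := by
        refine setLIntegral_mono (by fun_prop) fun p ⟨hx, hy, hz, _⟩ ↦ ?_
        exact ofReal_integrand_le_majorant h₁.1.le h₂.1.le h₃.1.le h₄.1.le hε hx hy hz
    _ ≤ ∫⁻ x in I, ∫⁻ q in I ×ˢ (I ×ˢ I),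
          crossMajorant α₁ α₂ ε q.1 * cycleMajorant α₃ α₄ x q.2.1 q.2.2 :=
        setLIntegral_prod_le _ _ _
    _ ≤ ∫⁻ x in I, A * B := by
        refine setLIntegral_mono' measurableSet_Icc fun x hx ↦ ?_
        rw [setLIntegral_prod_mul (f := crossMajorant α₁ α₂ ε)
          (g := fun q : ℝ × ℝ ↦ cycleMajorant α₃ α₄ x q.1 q.2) (by fun_prop) (by fun_prop)]
        exact mul_le_mul' (lintegral_crossMajorant_le hε) (lintegral_cycleMajorant_le hx)
    _ = A * B := by simp [I]
    _ < ⊤ := by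
        have := kernelMass_lt_top h₁.2
        have := kernelMass_lt_top h₂.2
        have := kernelMass_lt_top h₃.2
        have := kernelMass_lt_top h₄.2
        finiteness
end
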